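/- arXiv:2512.00452 — 8 statements merged into one kernel-verified Lean document; each statement's English description precedes it below -/
import Mathlib

section
/- Let f ∈ ℂ[X][Y] be a polynomial in Y with coefficients in ℂ[X] which is monic in Y and has degree at least 1 in Y. Let s : ℂ → ℂ be an entire function (differentiable on all of ℂ) such that f(z, s(z)) = 0 for every z ∈ ℂ (i.e., evaluating each coefficient of f at z and then evaluating the resulting one-variable polynomial at s(z) gives 0). Then s is a polynomial function: there exists P ∈ ℂ[X] with s(z) = P(z) for all z ∈ ℂ. -/
/-!
Specialising `f` at `z` gives a monic polynomial whose lower coefficients are polynomials in `z`,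
so by Cauchy's bound its roots, and in particular `s z`, are `O(|z| ^ M)` for some `M`. An entire
function of polynomial growth is a polynomial: dividing out `s 0` and `z` lowers the growth
exponent, and Liouville's theorem handles exponent zero.
-/

open Polynomial Finset

namespace Polynomial

section NormedDivisionRing

variable {K : Type*} [NormedDivisionRing K]

lemma norm_eval_le_sum_norm_coeff_mul_pow {q : K[X]} {M : ℕ} (hM : q.natDegree ≤ M) {z : K}
    (hz : 1 ≤ ‖z‖) :
    ‖q.eval z‖ ≤ (∑ j ∈ range (q.natDegree + 1), ‖q.coeff j‖) * ‖z‖ ^ M := by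
  rw [eval_eq_sum_range, sum_mul]
  refine (norm_sum_le _ _).trans (sum_le_sum fun j hj => ?_)
  rw [norm_mul, norm_pow]
  gcongr
  exact (mem_range_succ_iff.mp hj).trans hM

lemma Monic.norm_lt_add_one_of_isRoot {p : K[X]} (hp : p.Monic) {B : ℝ} (hB₀ : 0 ≤ B)
    (hB : ∀ i < p.natDegree, ‖p.coeff i‖ ≤ B) {w : K} (hw : p.IsRoot w) : ‖w‖ < B + 1 := by
  lift B to NNReal using hB₀
  have hsup : (range p.natDegree).sup (‖p.coeff ·‖₊) ≤ B :=
    Finset.sup_le fun i hi => by exact_mod_cast hB i (mem_range.mp hi)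
  have hroot := hw.norm_lt_cauchyBound hp.ne_zero
  rw [cauchyBound, hp.leadingCoeff, nnnorm_one, div_one] at hroot
  exact_mod_cast hroot.trans_le (by gcongr)

end NormedDivisionRing

lemma Monic.exists_norm_root_map_le_mul_pow {K : Type*} [NormedField K] {f : K[X][X]}
    (hf : f.Monic) :
    ∃ (C : ℝ) (M : ℕ), ∀ z w : K, 1 ≤ ‖z‖ → (f.map (evalRingHom z)).IsRoot w →
      ‖w‖ ≤ C * ‖z‖ ^ M := by
  set M := (range f.natDegree).sup fun i => (f.coeff i).natDegree
  set b : ℕ → ℝ := fun i => ∑ j ∈ range ((f.coeff i).natDegree + 1), ‖(f.coeff i).coeff j‖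
  set B := ∑ i ∈ range f.natDegree, b i
  have hb : ∀ i, 0 ≤ b i := fun i => sum_nonneg fun j _ => norm_nonneg _
  refine ⟨B + 1, M, fun z w hz hw => ?_⟩
  have hcoeff : ∀ i < (f.map (evalRingHom z)).natDegree,
      ‖(f.map (evalRingHom z)).coeff i‖ ≤ B * ‖z‖ ^ M := by
    intro i hi
    rw [hf.natDegree_map] at hi
    rw [coeff_map, coe_evalRingHom]
    refine (norm_eval_le_sum_norm_coeff_mul_pow (M := M) ?_ hz).trans
      (mul_le_mul_of_nonneg_right (single_le_sum (fun i _ => hb i) (mem_range.mpr hi)) ?_)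
    · exact le_sup (f := fun i => (f.coeff i).natDegree) (mem_range.mpr hi)
    · positivity
  have hw_lt := (hf.map (evalRingHom z)).norm_lt_add_one_of_isRoot (by positivity) hcoeff hw
  have hzM : 1 ≤ ‖z‖ ^ M := one_le_pow₀ hz
  nlinarith

end Polynomial

section Liouville

variable {E : Type*} [NormedAddCommGroup E] [NormedSpace ℂ E]

lemma Differentiable.exists_const_of_norm_le_of_one_le_norm {s : ℂ → E}
    (hs : Differentiable ℂ s) {C : ℝ} (hC : ∀ z, 1 ≤ ‖z‖ → ‖s z‖ ≤ C) : ∃ c, ∀ z, s z = c := by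
  obtain ⟨C', hC'⟩ := (isCompact_closedBall (0 : ℂ) 1).exists_bound_of_continuousOn
    hs.continuous.continuousOn
  refine hs.exists_const_forall_eq_of_bounded (isBounded_iff_forall_norm_le.mpr ⟨max C C', ?_⟩)
  rintro _ ⟨z, rfl⟩
  rcases le_or_gt 1 ‖z‖ with hz | hz
  · exact (hC z hz).trans (le_max_left _ _)
  · exact (hC' z (mem_closedBall_zero_iff.mpr hz.le)).trans (le_max_right _ _)

lemma norm_dslope_zero_le_mul_pow {s : ℂ → E} {C : ℝ} {N : ℕ}
    (hC : ∀ z, 1 ≤ ‖z‖ → ‖s z‖ ≤ C * ‖z‖ ^ (N + 1)) {z : ℂ} (hz : 1 ≤ ‖z‖) :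
    ‖dslope s 0 z‖ ≤ (C + ‖s 0‖) * ‖z‖ ^ N := by
  have hz₀ : 0 < ‖z‖ := one_pos.trans_le hz
  rw [dslope_of_ne s (norm_pos_iff.mp hz₀), slope_def_module, sub_zero, norm_smul, norm_inv]
  calc ‖z‖⁻¹ * ‖s z - s 0‖ ≤ ‖z‖⁻¹ * (C * ‖z‖ ^ (N + 1) + ‖s 0‖) := by
        gcongr
        exact (norm_sub_le _ _).trans (add_le_add_left (hC z hz) _)
    _ = C * ‖z‖ ^ N + ‖s 0‖ * ‖z‖⁻¹ := by field_simp; ring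
    _ ≤ C * ‖z‖ ^ N + ‖s 0‖ * ‖z‖ ^ N := by
        gcongr
        exact (inv_le_one_of_one_le₀ hz).trans (one_le_pow₀ hz)
    _ = (C + ‖s 0‖) * ‖z‖ ^ N := by ring

end Liouville

theorem Differentiable.exists_eq_eval_of_norm_le_mul_pow {s : ℂ → ℂ} (hs : Differentiable ℂ s)
    {C : ℝ} {N : ℕ} (hC : ∀ z, 1 ≤ ‖z‖ → ‖s z‖ ≤ C * ‖z‖ ^ N) :
    ∃ P : ℂ[X], ∀ z, s z = P.eval z := by
  induction N generalizing s C with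
  | zero =>
    obtain ⟨c, hc⟩ := hs.exists_const_of_norm_le_of_one_le_norm (by simpa using hC)
    exact ⟨Polynomial.C c, fun z => by rw [hc, eval_C]⟩
  | succ N ih =>
    have hds : Differentiable ℂ (dslope s 0) := by
      rw [← differentiableOn_univ]
      exact (Complex.differentiableOn_dslope Filter.univ_mem).mpr hs.differentiableOn
    obtain ⟨Q, hQ⟩ := ih hds fun z hz => norm_dslope_zero_le_mul_pow hC hz
    refine ⟨Polynomial.C (s 0) + X * Q, fun z => ?_⟩
    have := sub_smul_dslope s 0 z
    rw [sub_zero, smul_eq_mul, hQ] at this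
    rw [eval_add, eval_C, eval_mul, eval_X]
    linear_combination -this

theorem stmt_2_general (f : Polynomial (Polynomial ℂ)) (hmonic : f.Monic)
    (s : ℂ → ℂ) (hs : Differentiable ℂ s)
    (hroot : ∀ z : ℂ, Polynomial.eval₂ (Polynomial.evalRingHom z) (s z) f = 0) :
    ∃ P : Polynomial ℂ, ∀ z : ℂ, s z = P.eval z := by
  obtain ⟨C, M, hC⟩ := hmonic.exists_norm_root_map_le_mul_pow
  exact hs.exists_eq_eval_of_norm_le_mul_pow fun z hz =>
    hC z (s z) hz (by rw [IsRoot, eval_map]; exact hroot z)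

/-- An entire function which is a root of a polynomial `f ∈ ℂ[X][Y]`, monic in `Y` of
degree at least `1`, is a polynomial function. -/
theorem stmt_2 (f : Polynomial (Polynomial ℂ)) (hmonic : f.Monic) (hdeg : 1 ≤ f.natDegree)
    (s : ℂ → ℂ) (hs : Differentiable ℂ s)
    (hroot : ∀ z : ℂ, Polynomial.eval₂ (Polynomial.evalRingHom z) (s z) f = 0) :
    ∃ P : Polynomial ℂ, ∀ z : ℂ, s z = P.eval z :=
  stmt_2_general f hmonic s hs hroot
end

section
/- Let (a_n)_{n≥0} be a strictly increasing sequence of non-negative integers and let γ = Σ_{i=0}^∞ 2^{a_i} ∈ ℤ₂ (the series converges 2-adically). Let m be a positive integer with base-2 expansion m = Σ_{i=0}^{N} 2^{b_i}, where b_0 < b_1 < ⋯ < b_N, and let M be the (unique) non-negative integer such that Σ_{i=0}^{M−1} 2^{a_i} < m ≤ Σ_{i=0}^{M} 2^{a_i}. Then v₂(C(γ,m)) ≥ a_M − b_N. Moreover, if m = 2^b is a power of 2 (so N = 0 and b_0 = b), then v₂(C(γ,2^b)) = a_M − b exactly. -/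
/-!
Let `n_K = ∑_{k<K} 2^{a_k}` be the truncations of `γ`. Since `x - y` divides `P(x) - P(y)` for
the integral polynomial `P = X(X-1)⋯(X-m+1)`, one has `|C(x,m) - C(y,m)| ≤ |x - y| / |m!|` on
`ℤ₂`; as `v₂ C(n_K,m) ≤ a_M` for every `K > M`, `C(γ,m)` has the valuation of `C(n_K,m)` once `K`
is large. By Kummer's theorem `v₂ C(n,m)` counts the `i ≥ 1` with `n mod 2^i < m mod 2^i`. For
`n = n_K` this fails when `i > a_M`, since then `n mod 2^i ≥ ∑_{k≤M} 2^{a_k} ≥ m`; it holds when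
`b_N < i ≤ a_M`, since then `n mod 2^i ≤ ∑_{k<M} 2^{a_k} < m = m mod 2^i`; and if `m = 2^b` it
fails for `i ≤ b`, where `m mod 2^i = 0`.
-/

/-- The generalized binomial coefficient `C(γ, m) = γ(γ-1)⋯(γ-m+1)/m!` for `γ ∈ ℚ_p`. -/
noncomputable def pChoose (p : ℕ) [Fact p.Prime] (γ : ℚ_[p]) (m : ℕ) : ℚ_[p] :=
  (descPochhammer ℚ_[p] m).eval γ / (m.factorial : ℚ_[p])

open Finset Filter Topology Nat

theorem sum_pow_lt_pow_of_injOn {ι : Type*} {s : Finset ι} {a : ι → ℕ} {q i : ℕ} (hq : 2 ≤ q)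
    (ha : Set.InjOn a s) (h : ∀ k ∈ s, a k < i) : ∑ k ∈ s, q ^ a k < q ^ i := by
  rw [← sum_image ha]
  exact Nat.geomSum_lt hq (by simpa using h)

theorem sum_pow_mod_pow_of_injOn {ι : Type*} {s : Finset ι} {a : ι → ℕ} {q : ℕ} (hq : 2 ≤ q)
    (ha : Set.InjOn a s) (i : ℕ) :
    (∑ k ∈ s, q ^ a k) % q ^ i = ∑ k ∈ s with a k < i, q ^ a k := by
  have hlow : ∑ k ∈ s with a k < i, q ^ a k < q ^ i :=
    sum_pow_lt_pow_of_injOn hq (ha.mono (coe_subset.2 (filter_subset _ s)))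
      fun k hk => (mem_filter.1 hk).2
  have hhigh : q ^ i ∣ ∑ k ∈ s with ¬a k < i, q ^ a k :=
    dvd_sum fun k hk => pow_dvd_pow q (not_lt.1 (mem_filter.1 hk).2)
  rw [← sum_filter_add_sum_filter_not s (fun k => a k < i), Nat.add_mod,
    Nat.mod_eq_zero_of_dvd hhigh, add_zero, Nat.mod_mod, Nat.mod_eq_of_lt hlow]

theorem padicValNat_choose_eq_card_mod_lt {p n k b : ℕ} [hp : Fact p.Prime] (hkn : k ≤ n)
    (hnb : log p n < b) :
    padicValNat p (n.choose k) = #{i ∈ Ico 1 b | n % p ^ i < k % p ^ i} := by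
  rw [padicValNat_choose hkn hnb]
  congr 1
  refine filter_congr fun i _ => ?_
  have hn : n % p ^ i = (k % p ^ i + (n - k) % p ^ i) % p ^ i := by
    rw [← Nat.add_mod, Nat.add_sub_cancel' hkn]
  have hk := Nat.mod_lt k (pow_pos hp.out.pos i)
  have hnk := Nat.mod_lt (n - k) (pow_pos hp.out.pos i)
  rw [hn]
  generalize k % p ^ i = x at *
  generalize (n - k) % p ^ i = y at *
  generalize p ^ i = q at *
  rcases lt_or_ge (x + y) q with h | h
  · rw [Nat.mod_eq_of_lt h]
    omega
  · rw [Nat.mod_eq_sub_mod h, Nat.mod_eq_of_lt (by omega)]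
    omega

theorem sum_range_two_pow_lt_of_strictMonoOn {b : ℕ → ℕ} {N : ℕ}
    (hb : StrictMonoOn b (Set.Iic N)) : ∑ i ∈ range (N + 1), 2 ^ b i < 2 ^ (b N + 1) := by
  have hsub : (↑(range (N + 1)) : Set ℕ) ⊆ Set.Iic N := fun i hi => by
    simpa [Nat.lt_succ_iff] using hi
  refine sum_pow_lt_pow_of_injOn le_rfl (hb.injOn.mono hsub) fun i hi => lt_succ_of_le ?_
  exact hb.monotoneOn (hsub hi) (Set.mem_Iic.2 le_rfl) (mem_range_succ_iff.1 hi)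

section BinaryCarries

variable {a : ℕ → ℕ} {K M m i : ℕ}

theorem sum_range_two_pow_mod_le (ha : StrictMono a) (hi : i ≤ a M) :
    (∑ k ∈ range K, 2 ^ a k) % 2 ^ i ≤ ∑ k ∈ range M, 2 ^ a k := by
  rw [sum_pow_mod_pow_of_injOn le_rfl ha.injective.injOn]
  refine sum_le_sum_of_subset fun k hk => ?_
  simp only [mem_filter, mem_range] at hk ⊢
  exact ha.lt_iff_lt.1 (hk.2.trans_le hi)

theorem sum_range_two_pow_le_mod (ha : StrictMono a) (hMK : M < K) (hi : a M < i) :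
    ∑ k ∈ range (M + 1), 2 ^ a k ≤ (∑ k ∈ range K, 2 ^ a k) % 2 ^ i := by
  rw [sum_pow_mod_pow_of_injOn le_rfl ha.injective.injOn]
  refine sum_le_sum_of_subset fun k hk => ?_
  simp only [mem_filter, mem_range] at hk ⊢
  exact ⟨by omega, (ha.monotone (by omega)).trans_lt hi⟩

theorem mod_two_pow_le_sum_range_mod (ha : StrictMono a)
    (hM : m ≤ ∑ k ∈ range (M + 1), 2 ^ a k) (hMK : M < K) (hi : a M < i) :
    m % 2 ^ i ≤ (∑ k ∈ range K, 2 ^ a k) % 2 ^ i :=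
  (Nat.mod_le m _).trans (hM.trans (sum_range_two_pow_le_mod ha hMK hi))

theorem sum_range_mod_two_pow_lt_mod (ha : StrictMono a) (hM : ∑ k ∈ range M, 2 ^ a k < m)
    (hmi : m < 2 ^ i) (hi : i ≤ a M) :
    (∑ k ∈ range K, 2 ^ a k) % 2 ^ i < m % 2 ^ i := by
  rw [Nat.mod_eq_of_lt hmi]
  exact (sum_range_two_pow_mod_le ha hi).trans_lt hM

theorem padicValNat_choose_sum_range_le (ha : StrictMono a) (hmK : m ≤ ∑ k ∈ range K, 2 ^ a k)
    (hM : m ≤ ∑ k ∈ range (M + 1), 2 ^ a k) (hMK : M < K) :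
    padicValNat 2 ((∑ k ∈ range K, 2 ^ a k).choose m) ≤ a M := by
  rw [padicValNat_choose_eq_card_mod_lt hmK ((log_le_self 2 _).trans_lt (lt_add_one _))]
  calc _ ≤ #(Ico 1 (a M + 1)) := card_le_card fun i hi => ?_
    _ = a M := by simp
  simp only [mem_filter, mem_Ico] at hi ⊢
  exact ⟨hi.1.1, lt_succ_of_le <| not_lt.1 fun hiM =>
    (mod_two_pow_le_sum_range_mod ha hM hMK hiM).not_gt hi.2⟩

theorem le_padicValNat_choose_sum_range_add {c : ℕ} (ha : StrictMono a)
    (hmK : m ≤ ∑ k ∈ range K, 2 ^ a k) (hM : ∑ k ∈ range M, 2 ^ a k < m) (hmc : m < 2 ^ (c + 1)) :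
    a M ≤ padicValNat 2 ((∑ k ∈ range K, 2 ^ a k).choose m) + c := by
  set n := ∑ k ∈ range K, 2 ^ a k
  rw [padicValNat_choose_eq_card_mod_lt hmK (b := n + a M + 1)
    (by have := log_le_self 2 n; omega)]
  suffices Ico (c + 1) (a M + 1) ⊆ {i ∈ Ico 1 (n + a M + 1) | n % 2 ^ i < m % 2 ^ i} by
    have := card_le_card this
    simp only [card_Ico] at this
    omega
  intro i hi
  simp only [mem_filter, mem_Ico] at hi ⊢
  refine ⟨⟨by omega, by omega⟩, sum_range_mod_two_pow_lt_mod ha hM ?_ (by omega)⟩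
  exact hmc.trans_le (Nat.pow_le_pow_right two_pos hi.1)

theorem padicValNat_choose_two_pow_sum_range_add_le {c : ℕ} (ha : StrictMono a)
    (hmK : 2 ^ c ≤ ∑ k ∈ range K, 2 ^ a k) (hM : 2 ^ c ≤ ∑ k ∈ range (M + 1), 2 ^ a k)
    (hMK : M < K) :
    padicValNat 2 ((∑ k ∈ range K, 2 ^ a k).choose (2 ^ c)) + c ≤ a M := by
  have hcM : 2 ^ c < 2 ^ (a M + 1) := hM.trans_lt <| sum_pow_lt_pow_of_injOn le_rfl
    ha.injective.injOn fun k hk => lt_succ_of_le (ha.monotone (mem_range_succ_iff.1 hk))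
  rw [Nat.pow_lt_pow_iff_right (by norm_num)] at hcM
  set n := ∑ k ∈ range K, 2 ^ a k
  rw [padicValNat_choose_eq_card_mod_lt hmK ((log_le_self 2 n).trans_lt n.lt_add_one)]
  suffices {i ∈ Ico 1 (n + 1) | n % 2 ^ i < 2 ^ c % 2 ^ i} ⊆ Ico (c + 1) (a M + 1) by
    have := card_le_card this
    simp only [card_Ico] at this
    omega
  intro i hi
  simp only [mem_filter, mem_Ico] at hi ⊢
  refine ⟨not_lt.1 fun hic => ?_, lt_succ_of_le <| not_lt.1 fun hiM =>
    (mod_two_pow_le_sum_range_mod ha hM hMK hiM).not_gt hi.2⟩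
  rw [Nat.mod_eq_zero_of_dvd (pow_dvd_pow 2 (by omega))] at hi
  omega

end BinaryCarries

section PadicChoose

variable {p : ℕ} [hp : Fact p.Prime]

theorem pChoose_natCast (n m : ℕ) : pChoose p n m = n.choose m := by
  rw [pChoose, descPochhammer_eval_eq_descFactorial, Nat.descFactorial_eq_factorial_mul_choose]
  push_cast
  exact mul_div_cancel_left₀ _ (by exact_mod_cast factorial_ne_zero m)

theorem norm_pChoose_sub_le (x y : ℤ_[p]) (m : ℕ) :
    ‖pChoose p x m - pChoose p y m‖ ≤ ‖x - y‖ / ‖(m ! : ℚ_[p])‖ := by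
  have hcast (z : ℤ_[p]) : (descPochhammer ℚ_[p] m).eval (z : ℚ_[p]) =
      (((descPochhammer ℤ_[p] m).eval z : ℤ_[p]) : ℚ_[p]) := by
    rw [← descPochhammer_map PadicInt.Coe.ringHom, Polynomial.eval_map]
    exact Polynomial.eval₂_at_apply _ z
  rw [pChoose, pChoose, ← sub_div, hcast, hcast, ← PadicInt.coe_sub, norm_div,
    ← PadicInt.norm_def]
  gcongr
  obtain ⟨u, hu⟩ := Polynomial.sub_dvd_eval_sub x y (descPochhammer ℤ_[p] m)
  rw [hu, norm_mul]
  exact mul_le_of_le_one_right (norm_nonneg _) (PadicInt.norm_le_one u)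

theorem Padic.norm_natCast_eq_zpow {k : ℕ} (hk : k ≠ 0) :
    ‖(k : ℚ_[p])‖ = (p : ℝ) ^ (-(padicValNat p k : ℤ)) := by
  rw [Padic.norm_eq_zpow_neg_valuation (Nat.cast_ne_zero.2 hk), Padic.valuation_natCast]

theorem Padic.valuation_eq_of_norm_eq {x y : ℚ_[p]} (hx : x ≠ 0) (hy : y ≠ 0) (h : ‖x‖ = ‖y‖) :
    x.valuation = y.valuation := by
  rw [Padic.norm_eq_zpow_neg_valuation hx, Padic.norm_eq_zpow_neg_valuation hy] at h
  exact neg_inj.1 (zpow_right_injective₀ (by exact_mod_cast hp.out.pos)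
    (by exact_mod_cast hp.out.ne_one) h)

theorem pChoose_ne_zero_and_valuation_eq (x : ℤ_[p]) {n m : ℕ} (hmn : m ≤ n)
    (hx : ‖x - n‖ < (p : ℝ) ^ (-(padicValNat p (n.choose m) + m : ℤ))) :
    pChoose p x m ≠ 0 ∧ (pChoose p x m).valuation = padicValNat p (n.choose m) := by
  have hc : pChoose p n m ≠ 0 := by
    rw [pChoose_natCast]
    exact Nat.cast_ne_zero.2 (Nat.choose_pos hmn).ne'
  have hclose : ‖pChoose p x m - pChoose p n m‖ < ‖pChoose p n m‖ :=
    calc _ ≤ ‖x - n‖ / ‖(m ! : ℚ_[p])‖ := by simpa using norm_pChoose_sub_le x n m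
      _ < (p : ℝ) ^ (-(padicValNat p (n.choose m) + m : ℤ)) / p ^ (-(m : ℤ)) := by
          rw [Padic.norm_natCast_eq_zpow (factorial_ne_zero m)]
          gcongr
          · exact zpow_pos (by exact_mod_cast hp.out.pos) _
          · exact_mod_cast hp.out.one_lt.le
          · exact padicValNat_factorial_le p m
      _ = ‖pChoose p n m‖ := by
          rw [pChoose_natCast, Padic.norm_natCast_eq_zpow (Nat.choose_pos hmn).ne',
            ← zpow_sub₀ (by exact_mod_cast hp.out.ne_zero)]
          ring_nf
  have hnorm := Padic.norm_eq_of_norm_sub_lt_right hclose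
  have hne : pChoose p x m ≠ 0 := by
    rw [← norm_ne_zero_iff, hnorm, norm_ne_zero_iff]
    exact hc
  refine ⟨hne, ?_⟩
  rw [Padic.valuation_eq_of_norm_eq hne hc hnorm, pChoose_natCast, Padic.valuation_natCast]

end PadicChoose

theorem summable_pow_comp_of_norm_lt_one {R : Type*} [NormedRing R] [IsUltrametricDist R]
    [CompleteSpace R] {x : R} (hx : ‖x‖ < 1) {a : ℕ → ℕ} (ha : Tendsto a atTop atTop) :
    Summable fun i => x ^ a i := by
  refine NonarchimedeanAddGroup.summable_of_tendsto_cofinite_zero ?_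
  rw [Nat.cofinite_eq_atTop]
  exact (tendsto_pow_atTop_nhds_zero_of_norm_lt_one hx).comp ha

/-- For `γ = Σ 2^{a_i}` with `(a_i)` strictly increasing, and `m = Σ_{i=0}^N 2^{b_i}` with
`Σ_{i<M} 2^{a_i} < m ≤ Σ_{i≤M} 2^{a_i}`, one has `v₂(C(γ,m)) ≥ a_M - b_N`, with equality
`v₂(C(γ,2^b)) = a_M - b` when `m = 2^b` is a power of two (the case `N = 0`). -/
theorem stmt_5 (a : ℕ → ℕ) (ha : StrictMono a)
    (γ : ℤ_[2]) (hγ : γ = ∑' i : ℕ, (2 : ℤ_[2]) ^ (a i))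
    (N : ℕ) (b : ℕ → ℕ) (hb : StrictMonoOn b (Set.Iic N))
    (m : ℕ) (hm : m = ∑ i ∈ Finset.range (N + 1), 2 ^ (b i))
    (M : ℕ) (hM1 : ∑ i ∈ Finset.range M, 2 ^ (a i) < m)
    (hM2 : m ≤ ∑ i ∈ Finset.range (M + 1), 2 ^ (a i)) :
    pChoose 2 (γ : ℚ_[2]) m ≠ 0 ∧
    ((a M : ℤ) - (b N : ℤ)) ≤ (pChoose 2 (γ : ℚ_[2]) m).valuation ∧
    (N = 0 → (pChoose 2 (γ : ℚ_[2]) m).valuation = (a M : ℤ) - (b 0 : ℤ)) := by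
  have hlim : Tendsto (fun K => ((∑ k ∈ range K, 2 ^ a k : ℕ) : ℤ_[2])) atTop (𝓝 γ) := by
    have h2 : ‖(2 : ℤ_[2])‖ < 1 := by
      have := PadicInt.norm_p (p := 2)
      norm_num at this
      norm_num [this]
    push_cast
    exact hγ ▸ (summable_pow_comp_of_norm_lt_one h2 ha.tendsto_atTop).hasSum.tendsto_sum_nat
  obtain ⟨K, hK, hMK⟩ := ((hlim.eventually (Metric.ball_mem_nhds γ
    (ε := (2 : ℝ) ^ (-(a M + m : ℤ))) (by positivity))).and (eventually_gt_atTop M)).exists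
  have hmK : m ≤ ∑ k ∈ range K, 2 ^ a k :=
    hM2.trans (sum_le_sum_of_subset (range_subset_range.2 hMK))
  have hV := padicValNat_choose_sum_range_le ha hmK hM2 hMK
  obtain ⟨hne, hval⟩ := pChoose_ne_zero_and_valuation_eq γ hmK <| by
    rw [← dist_eq_norm, _root_.dist_comm]
    refine hK.trans_le (zpow_le_zpow_right₀ (by norm_num) ?_)
    omega
  refine ⟨hne, ?_, fun hN => ?_⟩
  · have := le_padicValNat_choose_sum_range_add ha hmK hM1
      (hm ▸ sum_range_two_pow_lt_of_strictMonoOn hb)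
    omega
  · subst hN
    simp only [zero_add, range_one, sum_singleton] at hm
    subst hm
    have := le_padicValNat_choose_sum_range_add ha hmK hM1 (Nat.pow_lt_pow_succ one_lt_two)
    have := padicValNat_choose_two_pow_sum_range_add_le ha hmK hM2 hMK
    omega
end

section
/- Let δ ∈ ℤ₂[[x]] be a power series with constant coefficient δ(0) = 0, and set s := 1 + 4δ ∈ ℤ₂[[x]]. Suppose s has radius of convergence equal to 1, i.e. there is no real r > 1 such that the coefficients c_n of s satisfy ‖c_n‖₂ · r^n → 0. Then for every integer q ≥ 1 the power series s^q also has radius of convergence equal to 1: there is no real r > 1 such that the coefficients of s^q, multiplied by r^n, tend to 0. -/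
/-!
The coefficients of `(1 + 4δ) ^ q` are `∑ₖ 4ᵏ (q choose k) [δᵏ]ₙ`. When `‖q‖₂ ≥ 1/2` the linear
term `4 q δₙ` dominates: if the coefficients of `(1 + 4δ) ^ q` decay like `σⁿ` with `σ < 1`, then
`‖δₙ‖ ≤ 2 ρⁿ` for a suitable `ρ < 1`, by induction on `n`, because the terms with `k ≥ 2` only
involve lower coefficients of `δ` and carry the factor `‖4ᵏ‖ = 4⁻ᵏ`, which beats the `2ᵏ`.
A general `q` reduces to this case by splitting off factors `2`, as `(1 + 4δ) ^ m` is again of the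
form `1 + 4δ'` with `δ'(0) = 0`.
-/

open Filter Finset Topology

theorem norm_four_padicInt : ‖(4 : ℤ_[2])‖ = 4⁻¹ := by
  rw [show (4 : ℤ_[2]) = (2 : ℕ) ^ 2 by norm_num, PadicInt.norm_p_pow]
  norm_num

theorem exists_pow_lt_half_imp_mul_pow_le (B : ℝ) {σ : ℝ} (hσ0 : 0 ≤ σ) (hσ1 : σ < 1) :
    ∃ ρ : ℝ, 0 ≤ ρ ∧ ρ < 1 ∧ ∀ n : ℕ, ρ ^ n < 2⁻¹ → B * σ ^ n ≤ ρ ^ n / 4 := by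
  set τ := √σ
  have hτ0 : 0 ≤ τ := Real.sqrt_nonneg σ
  have hτ1 : τ < 1 := (Real.sqrt_lt' one_pos).2 (by simpa using hσ1)
  obtain ⟨N, hN⟩ := eventually_atTop.1 <|
    ((tendsto_pow_atTop_nhds_zero_of_lt_one hτ0 hτ1).const_mul B).eventually_le_const
      (show B * 0 < 4⁻¹ by norm_num)
  set ρ₀ : ℝ := 2⁻¹ ^ ((N + 1 : ℕ) : ℝ)⁻¹
  have hρ₀ : ρ₀ ^ (N + 1) = 2⁻¹ := Real.rpow_inv_natCast_pow (by norm_num) (by omega)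
  refine ⟨max τ ρ₀, le_max_of_le_left hτ0,
    max_lt hτ1 (Real.rpow_lt_one (by norm_num) (by norm_num) (by positivity)), fun n hn => ?_⟩
  have hNn : N ≤ n := by
    by_contra! h
    refine hn.not_ge (hρ₀ ▸ ?_)
    calc ρ₀ ^ (N + 1) ≤ max τ ρ₀ ^ (N + 1) := pow_le_pow_left₀ (by positivity) (le_max_right _ _) _
      _ ≤ max τ ρ₀ ^ n := pow_le_pow_of_le_one (le_max_of_le_left hτ0)
          (max_le hτ1.le (Real.rpow_le_one (by norm_num) (by norm_num) (by positivity))) (by omega)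
  calc B * σ ^ n = B * τ ^ n * τ ^ n := by rw [← Real.sq_sqrt hσ0]; ring
    _ ≤ 4⁻¹ * τ ^ n := mul_le_mul_of_nonneg_right (hN n hNn) (by positivity)
    _ ≤ max τ ρ₀ ^ n / 4 := by
      rw [inv_mul_eq_div]
      gcongr
      exact le_max_left _ _

namespace PowerSeries

def IsOverconvergent {R : Type*} [SeminormedRing R] (f : PowerSeries R) : Prop :=
  ∃ r : ℝ, 1 < r ∧ Tendsto (fun n => ‖coeff n f‖ * r ^ n) atTop (𝓝 0)

theorem isOverconvergent_iff {R : Type*} [SeminormedRing R] (f : PowerSeries R) :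
    IsOverconvergent f ↔ ∃ C ρ : ℝ, 0 ≤ ρ ∧ ρ < 1 ∧ ∀ n, ‖coeff n f‖ ≤ C * ρ ^ n := by
  constructor
  · rintro ⟨r, hr, h⟩
    obtain ⟨C, hC⟩ := h.bddAbove_range
    have hr0 : 0 < r := one_pos.trans hr
    refine ⟨C, r⁻¹, by positivity, inv_lt_one_of_one_lt₀ hr, fun n => ?_⟩
    rw [inv_pow, ← div_eq_mul_inv, le_div_iff₀ (by positivity)]
    exact hC ⟨n, rfl⟩
  · rintro ⟨C, ρ, hρ0, hρ1, hC⟩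
    have hr : 1 < 2 / (1 + ρ) := by rw [lt_div_iff₀ (by positivity)]; linarith
    have hρr : ρ * (2 / (1 + ρ)) < 1 := by
      rw [mul_div_assoc', div_lt_one (by positivity)]; linarith
    refine ⟨2 / (1 + ρ), hr, ?_⟩
    have hlim := (tendsto_pow_atTop_nhds_zero_of_lt_one (by positivity) hρr).const_mul C
    rw [mul_zero] at hlim
    refine squeeze_zero (fun n => mul_nonneg (norm_nonneg _) (pow_nonneg (by linarith) _))
      (fun n => ?_) hlim
    rw [mul_pow, ← mul_assoc]
    exact mul_le_mul_of_nonneg_right (hC n) (by positivity)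

theorem exists_constantCoeff_eq_zero_and_one_add_mul_pow_eq {R : Type*} [CommSemiring R]
    (c δ : PowerSeries R) (hδ : constantCoeff δ = 0) (m : ℕ) :
    ∃ δ', constantCoeff δ' = 0 ∧ (1 + c * δ) ^ m = 1 + c * δ' := by
  induction m with
  | zero => exact ⟨0, map_zero _, by simp⟩
  | succ m ih =>
    obtain ⟨δ', hδ', h⟩ := ih
    refine ⟨δ' + δ + c * δ' * δ, by simp [hδ, hδ'], ?_⟩
    rw [pow_succ, h]
    ring

theorem coeff_one_add_C_mul_pow {R : Type*} [CommSemiring R] (c : R) (f : PowerSeries R)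
    (n q : ℕ) :
    coeff n ((1 + C c * f) ^ q) = ∑ k ∈ range (q + 1), c ^ k * q.choose k * coeff n (f ^ k) := by
  rw [add_comm, add_pow, map_sum]
  refine sum_congr rfl fun k _ => ?_
  rw [one_pow, mul_one, mul_pow, ← map_pow, ← map_natCast (C (R := R)), mul_right_comm, ← map_mul,
    coeff_C_mul]

section Ultrametric

variable {R : Type*} [NormedRing R] [IsUltrametricDist R]

theorem norm_coeff_mul_le_of_forall {f g : PowerSeries R} {n : ℕ} {C : ℝ} (hC : 0 ≤ C)
    (h : ∀ p ∈ antidiagonal n, ‖coeff p.1 f * coeff p.2 g‖ ≤ C) : ‖coeff n (f * g)‖ ≤ C := by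
  rw [coeff_mul]
  exact IsUltrametricDist.norm_sum_le_of_forall_le_of_nonneg hC h

theorem norm_coeff_pow_le [NormOneClass R] {f : PowerSeries R} {n : ℕ} {A ρ : ℝ} (hA : 0 ≤ A)
    (hρ : 0 ≤ ρ) (hf : ∀ m ≤ n, ‖coeff m f‖ ≤ A * ρ ^ m) (k : ℕ) :
    ∀ j ≤ n, ‖coeff j (f ^ k)‖ ≤ A ^ k * ρ ^ j := by
  induction k with
  | zero =>
    intro j _
    rw [pow_zero, coeff_one]
    split_ifs with hj
    · simp [hj]
    · rw [norm_zero]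
      positivity
  | succ k ih =>
    intro j hj
    rw [pow_succ']
    refine norm_coeff_mul_le_of_forall (by positivity) fun p hp => ?_
    rw [HasAntidiagonal.mem_antidiagonal] at hp
    calc ‖coeff p.1 f * coeff p.2 (f ^ k)‖ ≤ ‖coeff p.1 f‖ * ‖coeff p.2 (f ^ k)‖ := norm_mul_le _ _
      _ ≤ (A * ρ ^ p.1) * (A ^ k * ρ ^ p.2) :=
        mul_le_mul (hf _ (by omega)) (ih _ (by omega)) (norm_nonneg _) (by positivity)
      _ = A ^ (k + 1) * ρ ^ j := by rw [← hp, pow_add, pow_succ']; ring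

-- As `f` has no constant term and `k ≥ 2`, only coefficients of `f` of index `< n` contribute.
theorem norm_coeff_pow_le_of_constantCoeff_eq_zero [NormOneClass R] {f : PowerSeries R}
    (hf0 : constantCoeff f = 0) {n k : ℕ} (hk : 2 ≤ k) {A ρ : ℝ} (hA : 0 ≤ A) (hρ : 0 ≤ ρ)
    (hf : ∀ m < n, ‖coeff m f‖ ≤ A * ρ ^ m) : ‖coeff n (f ^ k)‖ ≤ A ^ k * ρ ^ n := by
  obtain ⟨k, rfl⟩ : ∃ l, k = l + 1 := ⟨k - 1, by omega⟩
  rw [pow_succ']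
  refine norm_coeff_mul_le_of_forall (by positivity) fun p hp => ?_
  rw [HasAntidiagonal.mem_antidiagonal] at hp
  rcases Nat.eq_zero_or_pos p.1 with h1 | h1
  · rw [h1, coeff_zero_eq_constantCoeff, hf0, zero_mul, norm_zero]
    positivity
  rcases Nat.eq_zero_or_pos p.2 with h2 | h2
  · rw [h2, coeff_zero_eq_constantCoeff, map_pow, hf0, zero_pow (by omega), mul_zero, norm_zero]
    positivity
  calc ‖coeff p.1 f * coeff p.2 (f ^ k)‖ ≤ ‖coeff p.1 f‖ * ‖coeff p.2 (f ^ k)‖ := norm_mul_le _ _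
    _ ≤ (A * ρ ^ p.1) * (A ^ k * ρ ^ p.2) :=
      mul_le_mul (hf _ (by omega)) (norm_coeff_pow_le hA hρ (n := n - 1)
        (fun m hm => hf m (by omega)) k _ (by omega)) (norm_nonneg _) (by positivity)
    _ = A ^ (k + 1) * ρ ^ n := by rw [← hp, pow_add, pow_succ']; ring

end Ultrametric

theorem norm_binomial_term_le {δ : PowerSeries ℤ_[2]} (hδ : constantCoeff δ = 0) {ρ : ℝ}
    (hρ : 0 ≤ ρ) {n : ℕ} (hn : n ≠ 0) (ih : ∀ m < n, ‖coeff m δ‖ ≤ 2 * ρ ^ m) (q : ℕ) {k : ℕ}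
    (hk : k ≠ 1) : ‖(4 : ℤ_[2]) ^ k * q.choose k * coeff n (δ ^ k)‖ ≤ ρ ^ n / 4 := by
  rcases Nat.eq_zero_or_pos k with rfl | hk0
  · simp only [pow_zero, coeff_one, hn, if_false, mul_zero, norm_zero]
    positivity
  calc ‖(4 : ℤ_[2]) ^ k * q.choose k * coeff n (δ ^ k)‖
      = 4⁻¹ ^ k * ‖(q.choose k : ℤ_[2])‖ * ‖coeff n (δ ^ k)‖ := by
        rw [norm_mul, norm_mul, norm_pow, norm_four_padicInt]
    _ ≤ 4⁻¹ ^ k * 1 * (2 ^ k * ρ ^ n) := by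
        gcongr
        · exact PadicInt.norm_le_one _
        · exact norm_coeff_pow_le_of_constantCoeff_eq_zero hδ (by omega) (by norm_num) hρ ih
    _ = 2⁻¹ ^ k * ρ ^ n := by rw [mul_one, ← mul_assoc, ← mul_pow]; norm_num
    _ ≤ 2⁻¹ ^ 2 * ρ ^ n :=
        mul_le_mul_of_nonneg_right (pow_le_pow_of_le_one (by norm_num) (by norm_num) (by omega))
          (by positivity)
    _ = ρ ^ n / 4 := by ring

theorem norm_coeff_le_of_norm_coeff_one_add_four_mul_pow_le {δ : PowerSeries ℤ_[2]}
    (hδ : constantCoeff δ = 0) {q : ℕ} (hq : 2⁻¹ ≤ ‖(q : ℤ_[2])‖) {ρ : ℝ} (hρ : 0 ≤ ρ)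
    (h : ∀ n, ρ ^ n < 2⁻¹ → ‖coeff n ((1 + 4 * δ) ^ q)‖ ≤ ρ ^ n / 4) (n : ℕ) :
    ‖coeff n δ‖ ≤ 2 * ρ ^ n := by
  induction n using Nat.strong_induction_on with
  | _ n ih =>
  by_cases hρn : 2⁻¹ ≤ ρ ^ n
  · linarith [PadicInt.norm_le_one (coeff n δ)]
  rw [not_le] at hρn
  have hn : n ≠ 0 := by rintro rfl; norm_num at hρn
  have hq0 : q ≠ 0 := by rintro rfl; norm_num at hq
  set t : ℕ → ℤ_[2] := fun k => (4 : ℤ_[2]) ^ k * q.choose k * coeff n (δ ^ k)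
  have hsum : coeff n ((1 + 4 * δ) ^ q) = ∑ k ∈ range (q + 1), t k := by
    rw [← map_ofNat C 4, coeff_one_add_C_mul_pow]
  have hlin : t 1 = coeff n ((1 + 4 * δ) ^ q) + -∑ k ∈ (range (q + 1)).erase 1, t k := by
    rw [hsum, ← add_sum_erase _ t (mem_range.2 (by omega : 1 < q + 1))]
    ring
  have hrest : ‖∑ k ∈ (range (q + 1)).erase 1, t k‖ ≤ ρ ^ n / 4 :=
    IsUltrametricDist.norm_sum_le_of_forall_le_of_nonneg (by positivity) fun k hk =>
      norm_binomial_term_le hδ hρ hn ih q (ne_of_mem_erase hk)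
  have ht1 : ‖t 1‖ ≤ ρ ^ n / 4 := by
    rw [hlin]
    refine (IsUltrametricDist.norm_add_le_max _ _).trans (max_le (h n hρn) ?_)
    rwa [norm_neg]
  have ht1_eq : ‖t 1‖ = 4⁻¹ * ‖(q : ℤ_[2])‖ * ‖coeff n δ‖ := by
    simp only [t, pow_one, Nat.choose_one_right, norm_mul, norm_four_padicInt]
  rw [ht1_eq] at ht1
  nlinarith [norm_nonneg (coeff n δ)]

theorem isOverconvergent_one_add_four_mul_of_pow {δ : PowerSeries ℤ_[2]}
    (hδ : constantCoeff δ = 0) {q : ℕ} (hq : 2⁻¹ ≤ ‖(q : ℤ_[2])‖)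
    (h : IsOverconvergent ((1 + 4 * δ) ^ q)) : IsOverconvergent (1 + 4 * δ) := by
  obtain ⟨B, σ, hσ0, hσ1, hB⟩ := (isOverconvergent_iff _).1 h
  obtain ⟨ρ, hρ0, hρ1, hρ⟩ := exists_pow_lt_half_imp_mul_pow_le B hσ0 hσ1
  have hδρ := norm_coeff_le_of_norm_coeff_one_add_four_mul_pow_le hδ hq hρ0
    fun n hn => (hB n).trans (hρ n hn)
  refine (isOverconvergent_iff _).2 ⟨2, ρ, hρ0, hρ1, fun n => ?_⟩
  rcases Nat.eq_zero_or_pos n with rfl | hn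
  · simp [hδ]
  · rw [map_add, coeff_one, if_neg hn.ne', zero_add, ← map_ofNat C 4, coeff_C_mul, norm_mul,
      norm_four_padicInt]
    linarith [hδρ n, norm_nonneg (coeff n δ)]

theorem isOverconvergent_one_add_four_mul_of_pow_of_ne_zero {δ : PowerSeries ℤ_[2]}
    (hδ : constantCoeff δ = 0) {q : ℕ} (hq : q ≠ 0)
    (h : IsOverconvergent ((1 + 4 * δ) ^ q)) : IsOverconvergent (1 + 4 * δ) := by
  induction q using Nat.strong_induction_on with
  | _ q ih =>
  rcases Nat.even_or_odd' q with ⟨m, rfl | rfl⟩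
  · obtain ⟨δ', hδ', hm⟩ := exists_constantCoeff_eq_zero_and_one_add_mul_pow_eq 4 δ hδ m
    rw [pow_mul', hm] at h
    have h2 : ‖((2 : ℕ) : ℤ_[2])‖ = 2⁻¹ := by simpa using PadicInt.norm_p (p := 2)
    have := isOverconvergent_one_add_four_mul_of_pow hδ' h2.ge h
    exact ih m (by omega) (by omega) (hm ▸ this)
  · have hodd : ‖((2 * m + 1 : ℕ) : ℤ_[2])‖ = 1 :=
      PadicInt.norm_natCast_eq_one_iff.2 (by simp)
    exact isOverconvergent_one_add_four_mul_of_pow hδ (by rw [hodd]; norm_num) h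

end PowerSeries

/-- If `s = 1 + 4δ ∈ ℤ₂[[x]]` with `δ(0) = 0` has radius of convergence exactly `1`
(i.e. not greater than `1`), then so does every power `s^q`. -/
theorem stmt_8 (δ : PowerSeries ℤ_[2]) (hδ : PowerSeries.constantCoeff δ = 0)
    (s : PowerSeries ℤ_[2]) (hs : s = 1 + 4 * δ)
    (hrad : ¬ ∃ r : ℝ, 1 < r ∧
      Filter.Tendsto (fun n => ‖PowerSeries.coeff n s‖ * r ^ n) Filter.atTop (nhds 0)) :
    ∀ q : ℕ, 1 ≤ q → ¬ ∃ r : ℝ, 1 < r ∧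
      Filter.Tendsto (fun n => ‖PowerSeries.coeff n (s ^ q)‖ * r ^ n)
        Filter.atTop (nhds 0) := by
  intro q hq h
  subst hs
  exact hrad (PowerSeries.isOverconvergent_one_add_four_mul_of_pow_of_ne_zero hδ (by omega) h)
end

section
/- Let p be a prime and β ∈ ℤ_p a p-adic integer. If the sequence of binomial coefficients C(β,m) ∈ ℤ_p tends to 0 p-adically as m → ∞, then β is a natural number, i.e. there exists n ∈ ℕ with β = n in ℤ_p. -/
lemma descPochhammer_eval_prod {R : Type*} [CommRing R] (x : R) (n : ℕ) :
    (descPochhammer R n).eval x = ∏ i ∈ Finset.range n, (x - i) := by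
  induction n with
  | zero => simp [descPochhammer_zero]
  | succ n ih => rw [descPochhammer_succ_eval, ih, Finset.prod_range_succ]

/-- Key norm computation: if `n = β.appr k`, then `‖C(β, n)‖ = 1`. -/
lemma norm_pChoose_appr (p : ℕ) [Fact p.Prime] (β : ℤ_[p]) (k : ℕ) :
    ‖pChoose p (β : ℚ_[p]) (β.appr k)‖ = 1 := by
  set n := β.appr k with hn
  have hplt : n < p ^ k := PadicInt.appr_lt β k
  -- the congruence β ≡ n mod p^k
  have hspec : β - (n : ℤ_[p]) ∈ Ideal.span {(p : ℤ_[p]) ^ k} := PadicInt.appr_spec k β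
  have hsmall : ‖(β : ℚ_[p]) - (n : ℚ_[p])‖ ≤ (p : ℝ) ^ (-(k : ℤ)) := by
    have := (PadicInt.norm_le_pow_iff_mem_span_pow (β - (n : ℤ_[p])) k).mpr hspec
    have hcast : ((β - (n : ℤ_[p]) : ℤ_[p]) : ℚ_[p]) = (β : ℚ_[p]) - (n : ℚ_[p]) := by
      push_cast; ring
    rw [← PadicInt.padic_norm_e_of_padicInt, hcast] at this
    exact this
  -- for each i < n, ‖β - i‖ = ‖n - i‖
  have hkey : ∀ i ∈ Finset.range n, ‖(β : ℚ_[p]) - (i : ℚ_[p])‖ = ‖(n : ℚ_[p]) - (i : ℚ_[p])‖ := by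
    intro i hi
    rw [Finset.mem_range] at hi
    have hbig : (p : ℝ) ^ (-(k : ℤ)) < ‖(n : ℚ_[p]) - (i : ℚ_[p])‖ := by
      have hcast : (n : ℚ_[p]) - (i : ℚ_[p]) = (((n : ℤ) - (i : ℤ) : ℤ) : ℚ_[p]) := by push_cast; ring
      rw [hcast]
      by_contra hle
      push_neg at hle
      have hdvd := (Padic.norm_int_le_pow_iff_dvd ((n : ℤ) - i) k).mp hle
      have hpos : (0 : ℤ) < (n : ℤ) - i := by omega
      have := Int.le_of_dvd hpos hdvd
      have : (p : ℤ) ^ k ≤ (n : ℤ) := le_trans this (by omega)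
      have : (p : ℤ) ^ k < (p : ℤ) ^ k := lt_of_le_of_lt this (by exact_mod_cast hplt)
      omega
    have hne : ‖(β : ℚ_[p]) - (n : ℚ_[p])‖ ≠ ‖(n : ℚ_[p]) - (i : ℚ_[p])‖ :=
      ne_of_lt (lt_of_le_of_lt hsmall hbig)
    calc ‖(β : ℚ_[p]) - (i : ℚ_[p])‖
        = ‖((β : ℚ_[p]) - n) + ((n : ℚ_[p]) - i)‖ := by ring_nf
      _ = max ‖(β : ℚ_[p]) - (n : ℚ_[p])‖ ‖(n : ℚ_[p]) - (i : ℚ_[p])‖ :=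
          Padic.add_eq_max_of_ne hne
      _ = ‖(n : ℚ_[p]) - (i : ℚ_[p])‖ := max_eq_right (le_of_lt (lt_of_le_of_lt hsmall hbig))
  have hfacne : ‖(n.factorial : ℚ_[p])‖ ≠ 0 := by
    simp [Nat.factorial_ne_zero]
  rw [pChoose, norm_div, descPochhammer_eval_prod, norm_prod,
    Finset.prod_congr rfl hkey, ← norm_prod, ← descPochhammer_eval_prod,
    descPochhammer_eval_eq_descFactorial, Nat.descFactorial_self]
  exact div_self hfacne

/-- If the binomial coefficients `C(β,m)` of a `p`-adic integer `β` tend to `0` `p`-adically,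
then `β` is a natural number. -/
theorem stmt_11 (p : ℕ) [Fact p.Prime] (β : ℤ_[p])
    (h : Filter.Tendsto (fun m => pChoose p (β : ℚ_[p]) m) Filter.atTop (nhds 0)) :
    ∃ n : ℕ, (n : ℤ_[p]) = β := by
  have h' := Metric.tendsto_atTop.mp h 1 one_pos
  obtain ⟨N, hN⟩ := h'
  simp only [dist_zero_right] at hN
  -- all approximations are < N + 1
  have happrlt : ∀ k, β.appr k < N + 1 := by
    intro k
    by_contra hge
    push_neg at hge
    have := hN (β.appr k) (le_trans (Nat.le_succ N) hge)
    rw [norm_pChoose_appr] at this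
    exact lt_irrefl 1 this
  -- pigeonhole: some value is attained infinitely often
  obtain ⟨y, hy⟩ := Finite.exists_infinite_fiber (fun k => (⟨β.appr k, happrlt k⟩ : Fin (N + 1)))
  refine ⟨(y : ℕ), ?_⟩
  have hinf : {k | β.appr k = (y : ℕ)}.Infinite := by
    have h1 : ((fun k => (⟨β.appr k, happrlt k⟩ : Fin (N + 1))) ⁻¹' {y}).Infinite :=
      Set.infinite_coe_iff.mp hy
    refine h1.mono ?_
    intro k hk
    simp only [Set.mem_preimage, Set.mem_singleton_iff] at hk
    simpa using congrArg Fin.val hk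
  have hle : ∀ k : ℕ, ‖β - ((y : ℕ) : ℤ_[p])‖ ≤ (p : ℝ) ^ (-(k : ℤ)) := by
    intro k
    obtain ⟨k', hk'mem, hk'⟩ := hinf.exists_gt k
    have hspec : β - ((y : ℕ) : ℤ_[p]) ∈ Ideal.span {(p : ℤ_[p]) ^ k'} := by
      have := PadicInt.appr_spec k' β
      rwa [hk'mem] at this
    have h2 := (PadicInt.norm_le_pow_iff_mem_span_pow _ k').mpr hspec
    refine le_trans h2 ?_
    apply zpow_le_zpow_right₀
    · exact_mod_cast (Fact.out : p.Prime).one_lt.le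
    · omega
  have hzero : ‖β - ((y : ℕ) : ℤ_[p])‖ = 0 := by
    have htend : Filter.Tendsto (fun k : ℕ => (p : ℝ) ^ (-(k : ℤ))) Filter.atTop (nhds 0) := by
      simp_rw [zpow_neg, zpow_natCast, ← inv_pow]
      apply tendsto_pow_atTop_nhds_zero_of_lt_one
      · positivity
      · rw [inv_lt_one_iff₀]
        right
        exact_mod_cast (Fact.out : p.Prime).one_lt
    have := ge_of_tendsto' htend hle
    exact le_antisymm this (norm_nonneg _)
  have := sub_eq_zero.mp (norm_eq_zero.mp hzero)
  exact this.symm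
end

section
/- Let p be a prime, let α, β ∈ ℤ_p be p-adic integers not both natural numbers, and let a, b ∈ ℤ_p be distinct p-adic units (‖a‖_p = ‖b‖_p = 1, a ≠ b). Define c_m := Σ_{r+s=m} a^r b^s C(α,r) C(β,s) ∈ ℤ_p. Then the sequence (c_m) does NOT tend to 0 in ℤ_p as m → ∞. (The c_m are the coefficients of the power series (1+ax)^α (1+bx)^β.) -/
open Filter Topology

theorem tendsto_apply_zero_of_norm_le_tail {E : Type*} [SeminormedAddGroup E] {u : ℕ → ℕ → E}
    (h0 : Tendsto (u 0) atTop (𝓝 0))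
    (hstep : ∀ n, Tendsto (u n) atTop (𝓝 0) →
      ∀ m (C : ℝ), (∀ j, m < j → ‖u n j‖ ≤ C) → ‖u (n + 1) m‖ ≤ C) :
    Tendsto (fun n => u n 0) atTop (𝓝 0) := by
  have small : ∀ ε > 0, ∃ N, ∀ j ≥ N, ‖u 0 j‖ ≤ ε := fun ε hε =>
    eventually_atTop.1 ((tendsto_zero_iff_norm_tendsto_zero.1 h0).eventually (ge_mem_nhds hε))
  have bound : ∀ n k (C : ℝ), (∀ j, k + n ≤ j → ‖u 0 j‖ ≤ C) → ∀ m, k ≤ m → ‖u n m‖ ≤ C := by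
    intro n
    induction n with
    | zero => exact fun k C hC m hm => hC m (by omega)
    | succ n ih =>
      have hnull : Tendsto (u n) atTop (𝓝 0) := by
        refine NormedAddGroup.tendsto_nhds_zero.2 fun ε hε => ?_
        obtain ⟨N, hN⟩ := small (ε / 2) (half_pos hε)
        exact eventually_atTop.2 ⟨N, fun m hm =>
          (ih N _ (fun j hj => hN j (by omega)) m hm).trans_lt (half_lt_self hε)⟩
      intro k C hC m hm
      exact hstep n hnull m C fun j hj => ih (k + 1) C (fun i hi => hC i (by omega)) j (by omega)
  refine NormedAddGroup.tendsto_nhds_zero.2 fun ε hε => ?_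
  obtain ⟨N, hN⟩ := small (ε / 2) (half_pos hε)
  exact eventually_atTop.2 ⟨N, fun n hn =>
    (bound n 0 _ (fun j hj => hN j (by omega)) 0 le_rfl).trans_lt (half_lt_self hε)⟩

section

variable {K : Type*} [NormedField K]

theorem norm_neg_inv_le_one {a : K} (ha : 1 ≤ ‖a‖) : ‖-a⁻¹‖ ≤ 1 := by
  rw [norm_neg, norm_inv]
  exact inv_le_one_of_one_le₀ ha

variable [IsUltrametricDist K] [CompleteSpace K]

theorem summable_mul_pow_of_tendsto_zero {u : ℕ → K} (hu : Tendsto u atTop (𝓝 0)) {x : K}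
    (hx : ‖x‖ ≤ 1) : Summable fun n => u n * x ^ n := by
  refine NonarchimedeanAddGroup.summable_of_tendsto_cofinite_zero ?_
  rw [Nat.cofinite_eq_atTop]
  refine squeeze_zero_norm (fun n => ?_) (tendsto_zero_iff_norm_tendsto_zero.1 hu)
  rw [norm_mul, norm_pow]
  exact mul_le_of_le_one_right (norm_nonneg _) (pow_le_one₀ (norm_nonneg x) hx)

theorem tsum_mul_pow_eq_add {u : ℕ → K} (hu : Tendsto u atTop (𝓝 0)) {x : K} (hx : ‖x‖ ≤ 1) :
    ∑' n, u n * x ^ n = u 0 + x * ∑' n, u (n + 1) * x ^ n := by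
  rw [(summable_mul_pow_of_tendsto_zero hu hx).tsum_eq_zero_add, ← tsum_mul_left]
  simp only [pow_zero, mul_one, pow_succ]
  congr 1
  exact tsum_congr fun n => by ring

end

namespace PowerSeries

theorem derivative_rescale {R : Type*} [CommSemiring R] (a : R) (f : R⟦X⟧) :
    d⁄dX R (rescale a f) = C a * rescale a (d⁄dX R f) := by
  ext n
  rw [coeff_derivative, coeff_C_mul, coeff_rescale, coeff_rescale, coeff_derivative, pow_succ]
  ring

theorem rescale_C {R : Type*} [CommSemiring R] (a γ : R) : rescale a (C γ) = C γ := by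
  ext (_ | n) <;> simp [coeff_rescale, coeff_C]

section BinomialRing

variable {R : Type*} [CommRing R] [BinomialRing R]

theorem derivative_binomialSeries (γ : R) :
    d⁄dX R (binomialSeries R γ) = C γ * binomialSeries R (γ - 1) := by
  ext n
  have h := Ring.choose_smul_choose γ (Nat.le_add_left 1 n)
  simp only [Nat.choose_one_right, Ring.choose_one_right, Nat.add_sub_cancel, Nat.cast_one] at h
  rw [coeff_derivative, coeff_C_mul, binomialSeries_coeff, binomialSeries_coeff, smul_eq_mul,
    smul_eq_mul, mul_one, mul_one, ← h, nsmul_eq_mul]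
  push_cast
  ring

theorem one_add_C_mul_X_mul_rescale_binomialSeries (a γ : R) :
    (1 + C a * X) * rescale a (binomialSeries R (γ - 1)) = rescale a (binomialSeries R γ) := by
  conv_rhs => rw [← add_sub_cancel (1 : R) γ, binomialSeries_add, ← Nat.cast_one,
    binomialSeries_nat, pow_one, map_mul, map_add, map_one, rescale_X, Nat.cast_one]

theorem one_add_C_mul_X_mul_derivative_rescale_binomialSeries (a γ : R) :
    (1 + C a * X) * d⁄dX R (rescale a (binomialSeries R γ))
      = C (a * γ) * rescale a (binomialSeries R γ) := by
  rw [derivative_rescale, derivative_binomialSeries, map_mul, rescale_C, map_mul,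
    ← one_add_C_mul_X_mul_rescale_binomialSeries a γ]
  ring

end BinomialRing

variable {K : Type*} [NormedField K]

theorem isRestricted_one_iff (f : K⟦X⟧) :
    IsRestricted 1 f ↔ Tendsto (fun n => coeff n f) atTop (𝓝 0) := by
  simp only [isRestricted_iff', one_pow, mul_one, ← tendsto_zero_iff_norm_tendsto_zero]

theorem isRestricted_X (c : ℝ) : IsRestricted c (X : K⟦X⟧) := isRestricted_monomial c 1 1

-- Meaningful for restricted `f` and `‖x‖ ≤ 1`; otherwise the `tsum` may be its junk value `0`.
noncomputable def restrictedEval (x : K) (f : K⟦X⟧) : K := ∑' n, coeff n f * x ^ n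

theorem restrictedEval_C_mul (c x : K) (f : K⟦X⟧) :
    restrictedEval x (C c * f) = c * restrictedEval x f := by
  simp only [restrictedEval, coeff_C_mul, mul_assoc, tsum_mul_left]

section Ultrametric

variable [IsUltrametricDist K]

theorem IsRestricted.derivative {f : K⟦X⟧} (hf : IsRestricted 1 f) :
    IsRestricted 1 (d⁄dX K f) := by
  rw [isRestricted_one_iff] at hf ⊢
  refine squeeze_zero_norm (fun n => ?_)
    (tendsto_zero_iff_norm_tendsto_zero.1 ((tendsto_add_atTop_iff_nat 1).2 hf))
  rw [coeff_derivative, norm_mul, ← Nat.cast_succ]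
  exact mul_le_of_le_one_right (norm_nonneg _) (IsUltrametricDist.norm_natCast_le_one K _)

theorem IsRestricted.C_mul (c : K) {f : K⟦X⟧} (hf : IsRestricted 1 f) :
    IsRestricted 1 (C c * f) :=
  isRestricted.mul 1 (isRestricted_C 1 c) hf

theorem IsRestricted.one_add_C_mul_X_mul (c : K) {f : K⟦X⟧} (hf : IsRestricted 1 f) :
    IsRestricted 1 ((1 + C c * X) * f) :=
  isRestricted.mul 1 (isRestricted.add 1 (isRestricted_one 1) ((isRestricted_X 1).C_mul c)) hf

variable [CompleteSpace K]

theorem restrictedEval_add {f g : K⟦X⟧} (hf : IsRestricted 1 f) (hg : IsRestricted 1 g) {x : K}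
    (hx : ‖x‖ ≤ 1) : restrictedEval x (f + g) = restrictedEval x f + restrictedEval x g := by
  rw [isRestricted_one_iff] at hf hg
  simp only [restrictedEval, map_add, add_mul]
  exact (summable_mul_pow_of_tendsto_zero hf hx).tsum_add (summable_mul_pow_of_tendsto_zero hg hx)

theorem restrictedEval_X_mul {f : K⟦X⟧} (hf : IsRestricted 1 f) {x : K} (hx : ‖x‖ ≤ 1) :
    restrictedEval x (X * f) = x * restrictedEval x f := by
  have hXf := (isRestricted_one_iff _).1 (isRestricted.mul 1 (isRestricted_X 1) hf)
  rw [restrictedEval, tsum_mul_pow_eq_add hXf hx]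
  simp [restrictedEval, coeff_succ_X_mul]

theorem restrictedEval_one_add_C_mul_X_mul (c : K) {f : K⟦X⟧} (hf : IsRestricted 1 f) {x : K}
    (hx : ‖x‖ ≤ 1) :
    restrictedEval x ((1 + C c * X) * f) = (1 + c * x) * restrictedEval x f := by
  have hXf := isRestricted.mul 1 (isRestricted_X 1) hf
  rw [add_mul, one_mul, mul_assoc, restrictedEval_add hf (hXf.C_mul c) hx, restrictedEval_C_mul,
    restrictedEval_X_mul hf hx]
  ring

theorem norm_coeff_le_of_eq_one_add_C_mul_X_mul {a : K} (ha : 1 ≤ ‖a‖) {f g : K⟦X⟧}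
    (hf : IsRestricted 1 f) (hfg : f = (1 + C a * X) * g) (hzero : restrictedEval (-a⁻¹) f = 0)
    (m : ℕ) {C : ℝ} (hC : ∀ j, m < j → ‖coeff j f‖ ≤ C) : ‖coeff m g‖ ≤ C := by
  set x := -a⁻¹
  have hx : ‖x‖ ≤ 1 := norm_neg_inv_le_one ha
  have hax : a * x = -1 := by
    rw [mul_neg, mul_inv_cancel₀ (norm_pos_iff.1 (one_pos.trans_le ha))]
  rw [isRestricted_one_iff] at hf
  set S : ℕ → K := fun m => ∑' i, coeff (i + m) f * x ^ i
  have hS : ∀ m, S m = coeff m f + x * S (m + 1) := fun m => by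
    have := tsum_mul_pow_eq_add (u := fun i => coeff (i + m) f)
      (hf.comp (tendsto_add_atTop_nat m)) hx
    simpa only [S, zero_add, add_right_comm _ 1 m, ← add_assoc] using this
  have hcoeff_g : ∀ m, coeff m g = -x * S (m + 1) := by
    intro m
    induction m with
    | zero =>
      have h0 : coeff 0 f = coeff 0 g := by simp [hfg]
      have hS0 : S 0 = 0 := hzero
      linear_combination hS0 - hS 0 - h0
    | succ m ih =>
      have h1 : coeff (m + 1) f = coeff (m + 1) g + a * coeff m g := by
        simp [hfg, add_mul, mul_assoc, coeff_succ_X_mul]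
      linear_combination -h1 - hS (m + 1) - a * ih + S (m + 1) * hax
  rw [hcoeff_g, norm_mul, norm_neg]
  refine (mul_le_of_le_one_left (norm_nonneg _) hx).trans
    (IsUltrametricDist.norm_tsum_le_of_forall_le_of_nonneg ((norm_nonneg _).trans (hC (m + 1)
      (Nat.lt_succ_self m))) fun i => ?_)
  rw [norm_mul, norm_pow]
  exact mul_le_of_le_one_right (norm_nonneg _) (pow_le_one₀ (norm_nonneg x) hx) |>.trans
    (hC _ (by omega))

variable [CharZero K]

theorem restrictedEval_rescale_binomialSeries_mul_eq_zero {a b γ δ : K} (ha : 1 ≤ ‖a‖)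
    (hab : a ≠ b) (hγ : γ ≠ 0)
    (hF : IsRestricted 1 (rescale a (binomialSeries K γ) * rescale b (binomialSeries K δ))) :
    restrictedEval (-a⁻¹) (rescale a (binomialSeries K γ) * rescale b (binomialSeries K δ)) =
      0 := by
  set A := rescale a (binomialSeries K γ)
  set B := rescale b (binomialSeries K δ)
  set x := -a⁻¹
  have hx : ‖x‖ ≤ 1 := norm_neg_inv_le_one ha
  have hax : 1 + a * x = 0 := by
    rw [mul_neg, mul_inv_cancel₀ (norm_pos_iff.1 (one_pos.trans_le ha)), add_neg_cancel]
  have hODE : (1 + C a * X) * ((1 + C b * X) * d⁄dX K (A * B))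
      = C (a * γ) * ((1 + C b * X) * (A * B)) + C (b * δ) * ((1 + C a * X) * (A * B)) := by
    have hA := one_add_C_mul_X_mul_derivative_rescale_binomialSeries a γ
    have hB := one_add_C_mul_X_mul_derivative_rescale_binomialSeries b δ
    rw [Derivation.leibniz, smul_eq_mul, smul_eq_mul]
    linear_combination (1 + C a * X) * A * hB + (1 + C b * X) * B * hA
  have h := congrArg (restrictedEval x) hODE
  rw [restrictedEval_one_add_C_mul_X_mul _ (hF.derivative.one_add_C_mul_X_mul _) hx, hax,
    restrictedEval_add ((hF.one_add_C_mul_X_mul _).C_mul _) ((hF.one_add_C_mul_X_mul _).C_mul _) hx,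
    restrictedEval_C_mul, restrictedEval_C_mul, restrictedEval_one_add_C_mul_X_mul _ hF hx,
    restrictedEval_one_add_C_mul_X_mul _ hF hx, hax] at h
  have : γ * (a - b) * restrictedEval x (A * B) = 0 := by
    linear_combination -h - γ * b * restrictedEval x (A * B) * hax
  simpa [hγ, sub_ne_zero.2 hab] using this

theorem not_isRestricted_rescale_binomialSeries_mul {a b γ δ : K} (ha : 1 ≤ ‖a‖) (hab : a ≠ b)
    (hγ : ∀ n : ℕ, γ ≠ n) :
    ¬ IsRestricted 1 (rescale a (binomialSeries K γ) * rescale b (binomialSeries K δ)) := by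
  intro hF
  set F : ℕ → K⟦X⟧ := fun n =>
    rescale a (binomialSeries K (γ - n)) * rescale b (binomialSeries K δ)
  have hF0 : F 0 = rescale a (binomialSeries K γ) * rescale b (binomialSeries K δ) := by simp [F]
  have hstep : ∀ n, F n = (1 + C a * X) * F (n + 1) := fun n => by
    simp only [F, ← mul_assoc, ← one_add_C_mul_X_mul_rescale_binomialSeries a (γ - n)]
    push_cast
    ring_nf
  have hcoeff0 : ∀ n, coeff 0 (F n) = 1 := fun n => by simp [F, coeff_mul, coeff_rescale]
  have hlim := tendsto_apply_zero_of_norm_le_tail (u := fun n m => coeff m (F n))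
    ((isRestricted_one_iff _).1 (hF0 ▸ hF)) fun n hn m C hC =>
      norm_coeff_le_of_eq_one_add_C_mul_X_mul ha ((isRestricted_one_iff _).2 hn) (hstep n)
        (restrictedEval_rescale_binomialSeries_mul_eq_zero ha hab (sub_ne_zero.2 (hγ n))
          ((isRestricted_one_iff _).2 hn)) m hC
  simp only [hcoeff0] at hlim
  exact one_ne_zero (tendsto_nhds_unique tendsto_const_nhds hlim)

end Ultrametric

end PowerSeries

namespace PowerSeries

theorem pChoose_eq_ringChoose (p : ℕ) [Fact p.Prime] (γ : ℚ_[p]) (m : ℕ) :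
    pChoose p γ m = Ring.choose γ m := by
  rw [Ring.choose_eq_smul, pChoose, ← descPochhammer_map (Int.castRingHom ℚ_[p]),
    Polynomial.eval_map, ← Polynomial.eval₂_smulOneHom_eq_smeval, smul_eq_mul, div_eq_inv_mul]
  congr 2
  exact RingHom.ext_int _ _

theorem sum_range_pChoose_eq_coeff (p : ℕ) [Fact p.Prime] (a b α β : ℚ_[p]) (m : ℕ) :
    ∑ r ∈ Finset.range (m + 1), a ^ r * b ^ (m - r) * pChoose p α r * pChoose p β (m - r) =
      coeff m (rescale a (binomialSeries ℚ_[p] α) * rescale b (binomialSeries ℚ_[p] β)) := by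
  rw [coeff_mul, Finset.Nat.sum_antidiagonal_eq_sum_range_succ (fun i j =>
    coeff i (rescale a (binomialSeries ℚ_[p] α)) * coeff j (rescale b (binomialSeries ℚ_[p] β)))]
  refine Finset.sum_congr rfl fun r _ => ?_
  simp only [coeff_rescale, binomialSeries_coeff, pChoose_eq_ringChoose, smul_eq_mul, mul_one]
  ring

end PowerSeries

open PowerSeries in
/-- For `α, β ∈ ℤ_p` not both natural numbers and distinct `p`-adic units `a ≠ b`, the
coefficients `c_m = Σ_{r+s=m} a^r b^s C(α,r) C(β,s)` of `(1+ax)^α (1+bx)^β` do not tend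
to `0` in `ℤ_p`. -/
theorem stmt_12 (p : ℕ) [Fact p.Prime] (α β : ℤ_[p])
    (hnat : ¬ ((∃ n : ℕ, (n : ℤ_[p]) = α) ∧ (∃ n : ℕ, (n : ℤ_[p]) = β)))
    (a b : ℤ_[p]) (hab : a ≠ b) (ha : ‖a‖ = 1) (hb : ‖b‖ = 1) :
    ¬ Filter.Tendsto (fun m : ℕ => ∑ r ∈ Finset.range (m + 1),
        (a : ℚ_[p]) ^ r * (b : ℚ_[p]) ^ (m - r) *
          pChoose p (α : ℚ_[p]) r * pChoose p (β : ℚ_[p]) (m - r))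
      Filter.atTop (nhds 0) := by
  have hnotNat : ∀ γ : ℤ_[p], ¬ (∃ n : ℕ, (n : ℤ_[p]) = γ) → ∀ n : ℕ, (γ : ℚ_[p]) ≠ n :=
    fun γ hγ n h => hγ ⟨n, Subtype.ext (by rw [PadicInt.coe_natCast, h])⟩
  simp only [sum_range_pChoose_eq_coeff, ← isRestricted_one_iff]
  by_cases hα : ∃ n : ℕ, (n : ℤ_[p]) = α
  · rw [mul_comm]
    exact not_isRestricted_rescale_binomialSeries_mul hb.ge (fun h => hab (Subtype.ext h).symm)
      (hnotNat β fun hβ => hnat ⟨hα, hβ⟩)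
  · exact not_isRestricted_rescale_binomialSeries_mul ha.ge (fun h => hab (Subtype.ext h))
      (hnotNat α hα)
end

section
/- In the ring ℚ[[u]] of formal power series over ℚ, the series t := Σ_{n=0}^∞ 2·C(1/3,n)·u^n·T_n(−u/2) is well defined (the n-th summand 2·C(1/3,n)·u^n·T_n(−u/2) is a polynomial in u of order at least n, so the sum converges coefficientwise), has constant coefficient 2, and satisfies t³ − 3t = 2 − u² in ℚ[[u]]. Here T_n ∈ ℤ[X] is the n-th Chebyshev polynomial of the first kind and C(1/3,n) := (1/3)(1/3−1)⋯(1/3−n+1)/n! ∈ ℚ. -/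
/-- The rational binomial coefficient `C(γ, n) = γ(γ-1)⋯(γ-n+1)/n!`. -/
noncomputable def ratChoose (γ : ℚ) (n : ℕ) : ℚ :=
  (descPochhammer ℚ n).eval γ / (n.factorial : ℚ)

/-- The `n`-th summand `2·C(1/3,n)·u^n·T_n(-u/2)` as a polynomial in `u` over `ℚ`. -/
noncomputable def chebSummand (n : ℕ) : Polynomial ℚ :=
  Polynomial.C (2 * ratChoose (1 / 3) n) *
    (Polynomial.X ^ n *
      (Polynomial.Chebyshev.T ℚ (n : ℤ)).comp (Polynomial.C (-(1 : ℚ) / 2) * Polynomial.X))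

/-!
Let `x, y` be the two roots of `Y² + uY + 1`; they live in `ℂ[[u]]` by Hensel's lemma, since
`Y² + 1` has the simple roots `±i` modulo `u`. As `x + y = -u` and `xy = 1`, the Chebyshev
identity gives `2 T_n(-u/2) = xⁿ + yⁿ`, so `t = a + b` with `a = (1 + ux)^{1/3}` and
`b = (1 + uy)^{1/3}` (binomial series). Now `(ab)³ = (1 + ux)(1 + uy) = 1`, and `ab` has constant
coefficient `1` in the domain `ℂ[[u]]`, so `ab = 1`; hence `t³ - 3t = a³ + b³ = 2 + u(x + y) = 2 - u²`.
-/

open PowerSeries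

theorem ratChoose_eq_choose (γ : ℚ) (n : ℕ) : ratChoose γ n = Ring.choose γ n := by
  rw [ratChoose, Ring.choose_eq_smul, ← Polynomial.aeval_eq_smeval, Polynomial.aeval_def,
    ← Polynomial.eval_map, descPochhammer_map, smul_eq_mul, div_eq_inv_mul]

theorem Polynomial.Chebyshev.two_mul_T_eval_eq_pow_add_pow {R : Type*} [CommRing R] {x y z : R}
    (hxy : x * y = 1) (hz : 2 * z = x + y) (n : ℕ) :
    2 * (T R n).eval z = x ^ n + y ^ n := by
  rw [← dickson_one_one_eval_add_inv x y hxy, dickson_one_one_eq_chebyshev_C, ← hz,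
    show 2 * z = (2 * Polynomial.X : Polynomial R).eval z by simp, ← eval_comp, C_comp_two_mul_X]
  simp

namespace PowerSeries

theorem exists_sq_add_X_mul_add_one_eq_zero {R : Type*} [CommRing R] {i : R}
    (hi : i ^ 2 = -1) (h2 : IsUnit (2 : R)) : ∃ x : R⟦X⟧, x ^ 2 + X * x + 1 = 0 := by
  let f : Polynomial R⟦X⟧ := Polynomial.X ^ 2 + Polynomial.C X * Polynomial.X + 1
  have hf : f.Monic := by simp only [f]; monicity!
  have hroot : f.eval (C i) ∈ Ideal.span {(X : R⟦X⟧)} := by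
    refine Ideal.mem_span_singleton.mpr ⟨C i, ?_⟩
    simp [f, ← map_pow, hi]
  have hsimple : IsUnit (f.derivative.eval (C i)) := by
    have hderiv : constantCoeff (f.derivative.eval (C i)) = 2 * i := by
      simp [f]; ring
    rw [isUnit_iff_constantCoeff, hderiv]
    exact h2.mul (IsUnit.of_mul_eq_one (-i) (by linear_combination -hi))
  obtain ⟨x, hx, -⟩ := HenselianRing.is_henselian f hf (C i) hroot (hsimple.map _)
  exact ⟨x, by simpa [f] using hx⟩

theorem coeff_subst_eq_sum_range {R S : Type*} [CommRing R] [CommRing S] [Algebra R S]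
    {b : S⟦X⟧} (hb : constantCoeff b = 0) (f : R⟦X⟧) (k : ℕ) :
    coeff k (f.subst b) = ∑ n ∈ Finset.range (k + 1), coeff n f • coeff k (b ^ n) := by
  rw [coeff_subst' (HasSubst.of_constantCoeff_zero' hb)]
  refine finsum_eq_sum_of_support_subset _ fun n hn => ?_
  rw [Finset.coe_range, Set.mem_Iio, Nat.lt_succ_iff]
  by_contra! hkn
  refine hn ?_
  dsimp only
  rw [coeff_of_lt_order k, smul_zero]
  exact (Nat.cast_lt.mpr hkn).trans_le (le_order_pow_of_constantCoeff_eq_zero n hb)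

theorem binomialSeries_pow {R A : Type*} [CommRing R] [BinomialRing R] [Ring A] [Algebra R A]
    (r : R) (n : ℕ) : binomialSeries A r ^ n = binomialSeries A (n * r) := by
  induction n with
  | zero => simp
  | succ n ih => rw [pow_succ, ih, ← binomialSeries_add]; push_cast; ring_nf

theorem binomialSeries_inv_pow {A : Type*} [Ring A] [Algebra ℚ A] {n : ℕ} (hn : n ≠ 0) :
    binomialSeries A (n⁻¹ : ℚ) ^ n = 1 + X := by
  rw [binomialSeries_pow, mul_inv_cancel₀ (by exact_mod_cast hn), ← Nat.cast_one,
    binomialSeries_nat, pow_one]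

theorem subst_binomialSeries_inv_pow {S : Type*} [CommRing S] [Algebra ℚ S] {b : S⟦X⟧}
    (hb : constantCoeff b = 0) {n : ℕ} (hn : n ≠ 0) :
    (binomialSeries ℚ (n⁻¹ : ℚ)).subst b ^ n = 1 + b := by
  have hb' := HasSubst.of_constantCoeff_zero' hb
  rw [← subst_pow hb', binomialSeries_inv_pow hn, ← coe_substAlgHom hb', map_add, map_one,
    coe_substAlgHom, subst_X hb']

theorem constantCoeff_subst_binomialSeries {S : Type*} [CommRing S] [Algebra ℚ S] {b : S⟦X⟧}
    (hb : constantCoeff b = 0) (r : ℚ) : constantCoeff ((binomialSeries ℚ r).subst b) = 1 := by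
  rw [← coeff_zero_eq_constantCoeff_apply, coeff_subst_eq_sum_range hb]
  simp

theorem eq_one_of_pow_three_eq_one {R : Type*} [CommRing R] [IsDomain R] [CharZero R]
    {c : R⟦X⟧} (hc : c ^ 3 = 1) (hc0 : constantCoeff c = 1) : c = 1 := by
  have hne : c ^ 2 + c + 1 ≠ 0 := fun h => by
    have h3 : (3 : R) = 0 := by
      simpa [hc0, one_add_one_eq_two, two_add_one_eq_three] using congrArg constantCoeff h
    norm_num at h3
  have : (c - 1) * (c ^ 2 + c + 1) = 0 := by linear_combination hc
  exact sub_eq_zero.mp ((mul_eq_zero.mp this).resolve_right hne)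

theorem add_pow_three_sub_three_mul_add {R : Type*} [CommRing R] [IsDomain R] [CharZero R]
    {x y a b : R⟦X⟧} (hsum : x + y = -X) (hprod : x * y = 1) (ha : a ^ 3 = 1 + X * x)
    (hb : b ^ 3 = 1 + X * y) (ha0 : constantCoeff a = 1) (hb0 : constantCoeff b = 1) :
    (a + b) ^ 3 - 3 * (a + b) = 2 - X ^ 2 := by
  have hab : a * b = 1 := by
    refine eq_one_of_pow_three_eq_one ?_ (by simp [ha0, hb0])
    rw [mul_pow, ha, hb]
    linear_combination X * hsum + X ^ 2 * hprod
  linear_combination ha + hb + 3 * (a + b) * hab + X * hsum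

end PowerSeries

noncomputable def chebSeries : ℚ⟦X⟧ :=
  PowerSeries.mk fun k => ∑ n ∈ Finset.range (k + 1), (chebSummand n).coeff k

theorem coeff_chebSummand_of_lt {n k : ℕ} (hk : k < n) : (chebSummand n).coeff k = 0 := by
  rw [chebSummand, Polynomial.coeff_C_mul, Polynomial.X_pow_mul, Polynomial.coeff_mul_X_pow',
    if_neg (by omega), mul_zero]

theorem constantCoeff_chebSeries : constantCoeff chebSeries = 2 := by
  simp [chebSeries, chebSummand, ratChoose]

section RootsOfQuadratic

variable {K : Type*} [CommRing K] [Algebra ℚ K] {x y : K⟦X⟧}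

theorem map_chebSummand (hsum : x + y = -X) (hprod : x * y = 1) (n : ℕ) :
    map (algebraMap ℚ K) (chebSummand n : ℚ⟦X⟧) =
      Ring.choose (1 / 3 : ℚ) n • ((X * x) ^ n + (X * y) ^ n) := by
  set g := Polynomial.coeToPowerSeries.algHom (R := ℚ) K
  have hgX : g Polynomial.X = X := by simp [g, Polynomial.coeToPowerSeries.algHom_apply]
  have hgC (c : ℚ) : g (Polynomial.C c) = algebraMap ℚ K⟦X⟧ c := g.commutes c
  have hz : 2 * g (Polynomial.C (-1 / 2) * Polynomial.X) = x + y := by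
    rw [hsum, map_mul, hgX, hgC, ← mul_assoc, ← map_ofNat (algebraMap ℚ K⟦X⟧) 2,
      ← map_mul]
    norm_num
  have hT := Polynomial.Chebyshev.two_mul_T_eval_eq_pow_add_pow hprod hz n
  rw [← Polynomial.coeToPowerSeries.algHom_apply]
  change g (chebSummand n) = _
  rw [chebSummand, Polynomial.comp_eq_aeval, map_mul g, map_mul g, map_pow g,
    ← Polynomial.aeval_algHom_apply, Polynomial.Chebyshev.aeval_T, hgX, hgC, map_mul, map_ofNat,
    ratChoose_eq_choose, Algebra.smul_def]
  linear_combination (algebraMap ℚ K⟦X⟧ (Ring.choose (1 / 3 : ℚ) n) * X ^ n) * hT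

theorem map_chebSeries (hsum : x + y = -X) (hprod : x * y = 1) :
    map (algebraMap ℚ K) chebSeries =
      (PowerSeries.binomialSeries ℚ (1 / 3 : ℚ)).subst (X * x) +
        (PowerSeries.binomialSeries ℚ (1 / 3 : ℚ)).subst (X * y) := by
  ext k
  rw [coeff_map, chebSeries, coeff_mk, map_sum, map_add, coeff_subst_eq_sum_range (by simp),
    coeff_subst_eq_sum_range (by simp), ← Finset.sum_add_distrib]
  refine Finset.sum_congr rfl fun n _ => ?_
  rw [← Polynomial.coeff_coe, ← coeff_map, map_chebSummand hsum hprod,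
    LinearMap.map_smul_of_tower, map_add, binomialSeries_coeff, smul_eq_mul, mul_one, smul_add]

end RootsOfQuadratic

theorem chebSeries_pow_three_sub_three_mul : chebSeries ^ 3 - 3 * chebSeries = 2 - X ^ 2 := by
  obtain ⟨x, hx⟩ :=
    exists_sq_add_X_mul_add_one_eq_zero Complex.I_sq (isUnit_of_invertible (2 : ℂ))
  have hsum : x + (-X - x) = -X := by ring
  have hprod : x * (-X - x) = 1 := by linear_combination -hx
  have hthird : ((3 : ℕ) : ℚ)⁻¹ = 1 / 3 := by norm_num
  have hcube (w : ℂ⟦X⟧) :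
      (PowerSeries.binomialSeries ℚ (1 / 3 : ℚ)).subst (X * w) ^ 3 = 1 + X * w := by
    rw [← hthird, subst_binomialSeries_inv_pow (by simp) three_ne_zero]
  have hconst (w : ℂ⟦X⟧) :
      constantCoeff ((PowerSeries.binomialSeries ℚ (1 / 3 : ℚ)).subst (X * w)) = 1 :=
    constantCoeff_subst_binomialSeries (by simp) _
  apply map_injective (algebraMap ℚ ℂ) (algebraMap ℚ ℂ).injective
  simp only [map_sub, map_pow, map_mul, map_ofNat, map_X, map_chebSeries hsum hprod]
  exact add_pow_three_sub_three_mul_add hsum hprod (hcube x) (hcube _) (hconst x) (hconst _)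

/-- The series `t = Σ_n 2·C(1/3,n)·u^n·T_n(-u/2)` is well defined in `ℚ[[u]]` (the `n`-th
summand has order at least `n`), has constant coefficient `2`, and satisfies
`t³ - 3t = 2 - u²`. -/
theorem stmt_16 :
    (∀ n k : ℕ, k < n → (chebSummand n).coeff k = 0) ∧
    (PowerSeries.constantCoeff (R := ℚ))
      (PowerSeries.mk fun k => ∑ n ∈ Finset.range (k + 1), (chebSummand n).coeff k) = 2 ∧
    (PowerSeries.mk fun k => ∑ n ∈ Finset.range (k + 1), (chebSummand n).coeff k) ^ 3
      - 3 * (PowerSeries.mk fun k => ∑ n ∈ Finset.range (k + 1), (chebSummand n).coeff k)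
      = 2 - PowerSeries.X ^ 2 :=
  ⟨fun _ _ => coeff_chebSummand_of_lt, constantCoeff_chebSeries,
    chebSeries_pow_three_sub_three_mul⟩
end

section
/- Let p be a prime and for m ≥ 1 let C(1/p, m) := (1/p)(1/p − 1)⋯(1/p − m + 1)/m! ∈ ℚ_p. Then v_p(C(1/p,m)) = (S_p(m) − p·m)/(p − 1), equivalently ‖C(1/p,m)‖_p = p^{(p·m − S_p(m))/(p−1)}, where S_p(m) is the sum of the base-p digits of m. Consequently the power series Σ_{m≥0} C(1/p,m) x^m over ℚ_p (the binomial series for (1+x)^{1/p}) has radius of convergence exactly p^{−p/(p−1)}: for every real ρ with 0 < ρ < p^{−p/(p−1)} one has ‖C(1/p,m)‖_p·ρ^m → 0, while for ρ = p^{−p/(p−1)} the sequence ‖C(1/p,m)‖_p·ρ^m does not tend to 0. -/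
variable {p : ℕ} [hp : Fact p.Prime]

lemma Padic.norm_sub_natCast_of_one_lt_norm {x : ℚ_[p]} (hx : 1 < ‖x‖) (n : ℕ) :
    ‖x - n‖ = ‖x‖ := by
  have hn : ‖(n : ℚ_[p])‖ < ‖x‖ := by
    refine lt_of_le_of_lt ?_ hx
    simpa using Padic.norm_int_le_one (p := p) n
  rw [sub_eq_add_neg, Padic.add_eq_max_of_ne (by rw [norm_neg]; exact hn.ne'), norm_neg,
    max_eq_left hn.le]

lemma Padic.norm_descPochhammer_eval_of_one_lt_norm {x : ℚ_[p]} (hx : 1 < ‖x‖) (m : ℕ) :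
    ‖(descPochhammer ℚ_[p] m).eval x‖ = ‖x‖ ^ m := by
  induction m with
  | zero => simp
  | succ n ih =>
    rw [descPochhammer_succ_eval, norm_mul, ih, norm_sub_natCast_of_one_lt_norm hx, pow_succ]

lemma Padic.norm_natCast_of_ne_zero {n : ℕ} (hn : n ≠ 0) :
    ‖(n : ℚ_[p])‖ = ((p : ℝ) ^ padicValNat p n)⁻¹ := by
  rw [norm_eq_zpow_neg_valuation (Nat.cast_ne_zero.2 hn), valuation_natCast, zpow_neg,
    zpow_natCast]

lemma norm_pChoose_of_one_lt_norm {x : ℚ_[p]} (hx : 1 < ‖x‖) (m : ℕ) :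
    ‖pChoose p x m‖ = ‖x‖ ^ m * (p : ℝ) ^ padicValNat p m.factorial := by
  rw [pChoose, norm_div, Padic.norm_descPochhammer_eval_of_one_lt_norm hx,
    Padic.norm_natCast_of_ne_zero m.factorial_ne_zero, div_inv_eq_mul]

lemma norm_pChoose_inv_p (m : ℕ) :
    ‖pChoose p (1 / (p : ℚ_[p])) m‖ = (p : ℝ) ^ (m + padicValNat p m.factorial) := by
  have hnorm : ‖1 / (p : ℚ_[p])‖ = p := by rw [one_div, norm_inv, Padic.norm_p, inv_inv]
  have hp1 : (1 : ℝ) < p := by exact_mod_cast hp.out.one_lt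
  rw [norm_pChoose_of_one_lt_norm (hnorm ▸ hp1), hnorm, pow_add]

lemma valuation_pChoose_inv_p (m : ℕ) :
    (pChoose p (1 / (p : ℚ_[p])) m).valuation = -((m + padicValNat p m.factorial : ℕ) : ℤ) := by
  have hp1 : (1 : ℝ) < p := by exact_mod_cast hp.out.one_lt
  have hne : pChoose p (1 / (p : ℚ_[p])) m ≠ 0 := by
    rw [← norm_ne_zero_iff, norm_pChoose_inv_p]
    positivity
  have h := Padic.norm_eq_zpow_neg_valuation hne
  rw [norm_pChoose_inv_p, ← zpow_natCast] at h
  rw [zpow_right_injective₀ (by positivity) hp1.ne' h, neg_neg]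

lemma sub_one_mul_padicValNat_factorial_cast {R : Type*} [Ring R] (m : ℕ) :
    ((p : R) - 1) * padicValNat p m.factorial = m - (p.digits m).sum := by
  have h := congrArg (fun n : ℕ => (n : R)) (sub_one_mul_padicValNat_factorial (p := p) m)
  simpa only [Nat.cast_mul, Nat.cast_sub hp.out.one_le, Nat.cast_sub (Nat.digit_sum_le p m),
    Nat.cast_one] using h

lemma norm_pChoose_inv_p_eq_rpow (m : ℕ) :
    ‖pChoose p (1 / (p : ℚ_[p])) m‖
      = (p : ℝ) ^ ((((p * m : ℕ) : ℝ) - ((Nat.digits p m).sum : ℝ)) / ((p : ℝ) - 1)) := by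
  have hp1 : (1 : ℝ) < p := by exact_mod_cast hp.out.one_lt
  have hexp : (((p * m : ℕ) : ℝ) - (p.digits m).sum) / ((p : ℝ) - 1)
      = ((m + padicValNat p m.factorial : ℕ) : ℝ) := by
    rw [div_eq_iff (by linarith), Nat.cast_mul, Nat.cast_add]
    linear_combination -sub_one_mul_padicValNat_factorial_cast (p := p) (R := ℝ) m
  rw [hexp, Real.rpow_natCast, norm_pChoose_inv_p]

lemma norm_pChoose_inv_p_mul_pow (m : ℕ) :
    ‖pChoose p (1 / (p : ℚ_[p])) m‖ * ((p : ℝ) ^ (-(p : ℝ) / ((p : ℝ) - 1))) ^ m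
      = (p : ℝ) ^ (-((p.digits m).sum : ℝ) / ((p : ℝ) - 1)) := by
  have hp1 : (1 : ℝ) < p := by exact_mod_cast hp.out.one_lt
  rw [norm_pChoose_inv_p_eq_rpow, ← Real.rpow_natCast, ← Real.rpow_mul (by positivity),
    ← Real.rpow_add (by positivity)]
  congr 1
  rw [Nat.cast_mul]
  generalize ((p.digits m).sum : ℝ) = S
  field_simp
  ring

lemma Nat.digits_base_pow_sum {b : ℕ} (hb : 1 < b) (k : ℕ) : (b.digits (b ^ k)).sum = 1 := by
  simpa [Nat.digits_of_lt b 1 one_ne_zero hb] using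
    congrArg List.sum (Nat.digits_base_pow_mul (k := k) hb Nat.one_pos)

/-- `v_p(C(1/p,m)) = (S_p(m) - p·m)/(p-1)`, i.e. `‖C(1/p,m)‖ = p^{(p·m-S_p(m))/(p-1)}`,
where `S_p(m)` is the sum of base-`p` digits of `m`; consequently the binomial series for
`(1+x)^{1/p}` has radius of convergence exactly `p^{-p/(p-1)}`. -/
theorem stmt_18 (p : ℕ) [hp : Fact p.Prime] :
    (∀ m : ℕ, 1 ≤ m →
      ((p : ℤ) - 1) * (pChoose p (1 / (p : ℚ_[p])) m).valuation
        = ((Nat.digits p m).sum : ℤ) - (p : ℤ) * m) ∧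
    (∀ m : ℕ, 1 ≤ m →
      ‖pChoose p (1 / (p : ℚ_[p])) m‖
        = (p : ℝ) ^ ((((p * m : ℕ) : ℝ) - ((Nat.digits p m).sum : ℝ)) / ((p : ℝ) - 1))) ∧
    (∀ ρ : ℝ, 0 < ρ → ρ < (p : ℝ) ^ (-(p : ℝ) / ((p : ℝ) - 1)) →
      Filter.Tendsto (fun m => ‖pChoose p (1 / (p : ℚ_[p])) m‖ * ρ ^ m)
        Filter.atTop (nhds 0)) ∧
    ¬ Filter.Tendsto (fun m => ‖pChoose p (1 / (p : ℚ_[p])) m‖ *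
        ((p : ℝ) ^ (-(p : ℝ) / ((p : ℝ) - 1))) ^ m) Filter.atTop (nhds 0) := by
  have hp1 : (1 : ℝ) < p := by exact_mod_cast hp.out.one_lt
  set r : ℝ := (p : ℝ) ^ (-(p : ℝ) / ((p : ℝ) - 1))
  have hr0 : 0 < r := by positivity
  refine ⟨fun m _ => ?_, fun m _ => norm_pChoose_inv_p_eq_rpow m, fun ρ hρ0 hρr => ?_,
    fun hlim => ?_⟩
  · rw [valuation_pChoose_inv_p, Nat.cast_add]
    linear_combination -sub_one_mul_padicValNat_factorial_cast (p := p) (R := ℤ) m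
  · refine squeeze_zero (fun m => by positivity) (fun m => ?_)
      (tendsto_pow_atTop_nhds_zero_of_lt_one (by positivity) ((div_lt_one hr0).2 hρr))
    have hS : (p : ℝ) ^ (-((p.digits m).sum : ℝ) / ((p : ℝ) - 1)) ≤ 1 :=
      Real.rpow_le_one_of_one_le_of_nonpos hp1.le
        (div_nonpos_of_nonpos_of_nonneg (neg_nonpos.2 (Nat.cast_nonneg _)) (by linarith))
    calc ‖pChoose p (1 / (p : ℚ_[p])) m‖ * ρ ^ m
        = ‖pChoose p (1 / (p : ℚ_[p])) m‖ * r ^ m * (ρ / r) ^ m := by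
          rw [div_pow, mul_assoc, mul_div_cancel₀ _ (by positivity)]
      _ ≤ 1 * (ρ / r) ^ m := by
          rw [norm_pChoose_inv_p_mul_pow (p := p) m]
          gcongr
      _ = (ρ / r) ^ m := one_mul _
  · have hpow := hlim.comp (tendsto_pow_atTop_atTop_of_one_lt hp.out.one_lt)
    simp only [Function.comp_def, r, norm_pChoose_inv_p_mul_pow,
      Nat.digits_base_pow_sum hp.out.one_lt, Nat.cast_one] at hpow
    exact (Real.rpow_pos_of_pos (by positivity) _).ne' (tendsto_const_nhds_iff.1 hpow)
end

section
/- Let p be a prime. There exists a unique formal power series s ∈ ℤ[[x]] with integer coefficients such that the constant coefficient of s equals 1 and s^{p−1}·(s − 1) = x in ℤ[[x]]. Moreover, for this s there are infinitely many n such that p does not divide the n-th coefficient of s. (Consequently, viewed over ℚ_p, the series s has radius of convergence exactly 1, which is strictly smaller than the absolute value p^p of the nonzero finite branch point −(p−1)^{p−1}p^{−p} of the equation y^{p−1}(y−1) = x.) -/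
/-!
Write `F(Y) = Yⁿ(Y - 1) - x` over `R⟦x⟧`. Then `F(1) = -x` lies in the ideal `(x)` and
`F'(1) = 1`, so `1` is a simple root of `F` modulo `(x)`; as `R⟦x⟧` is `(x)`-adically complete,
Hensel's lemma lifts it to a unique root `s` with constant term `1`.

Reducing `s` modulo `p` gives a solution over the domain `𝔽_p` with `n = p - 1 ≥ 1`. If only
finitely many coefficients of `s` were prime to `p`, this reduction would be a polynomial `g` with
`gⁿ(g - 1) = x`, which is impossible since the left side has degree `(n + 1) · deg g ≠ 1`.
-/

open Polynomial

/-- Uniqueness half of Hensel's lemma. -/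
theorem Polynomial.eq_of_isRoot_of_sub_mem {A : Type*} [CommRing A] {I : Ideal A}
    (hI : I ≤ Ideal.jacobson ⊥) {f : A[X]} {a₀ a b : A}
    (hunit : IsUnit (Ideal.Quotient.mk I (f.derivative.eval a₀)))
    (ha : f.IsRoot a) (hb : f.IsRoot b) (ha₀ : a - a₀ ∈ I) (hb₀ : b - a₀ ∈ I) : a = b := by
  have := isLocalHom_of_le_jacobson_bot I hI
  obtain ⟨k, hk⟩ := binomExpansion f a (b - a)
  have hfactor : (f.derivative.eval a + k * (b - a)) * (b - a) = 0 := by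
    rw [add_sub_cancel, ha.eq_zero, hb.eq_zero] at hk
    linear_combination -hk
  have hba : b - a ∈ I := by simpa using I.sub_mem hb₀ ha₀
  have hcongr : f.derivative.eval a + k * (b - a) - f.derivative.eval a₀ ∈ I := by
    rw [add_sub_right_comm]
    exact I.add_mem (Ideal.mem_of_dvd _ (sub_dvd_eval_sub a a₀ _) ha₀) (I.mul_mem_left k hba)
  have hcofactor : IsUnit (f.derivative.eval a + k * (b - a)) := by
    apply isUnit_of_map_unit (Ideal.Quotient.mk I)
    rwa [Ideal.Quotient.eq.mpr hcongr]
  exact (sub_eq_zero.mp (hcofactor.mul_right_eq_zero.mp hfactor)).symm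

theorem HenselianRing.existsUnique_isRoot {A : Type*} [CommRing A] {I : Ideal A}
    [HenselianRing A I] {f : A[X]} (hf : f.Monic) {a₀ : A} (h₀ : f.eval a₀ ∈ I)
    (hunit : IsUnit (Ideal.Quotient.mk I (f.derivative.eval a₀))) :
    ∃! a : A, f.IsRoot a ∧ a - a₀ ∈ I := by
  obtain ⟨a, ha, ha₀⟩ := HenselianRing.is_henselian f hf a₀ h₀ hunit
  exact ⟨a, ⟨ha, ha₀⟩, fun b ⟨hb, hb₀⟩ =>
    eq_of_isRoot_of_sub_mem HenselianRing.jac hunit hb ha hb₀ ha₀⟩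

theorem Polynomial.pow_mul_sub_one_ne_X {R : Type*} [CommRing R] [IsDomain R] {n : ℕ}
    (hn : n ≠ 0) (g : R[X]) : g ^ n * (g - 1) ≠ X := by
  intro h
  have hdeg := congrArg natDegree h
  rcases Nat.eq_zero_or_pos g.natDegree with hg | hg
  · rw [eq_C_of_natDegree_eq_zero hg, ← C_1, ← C_sub, ← C_pow, ← C_mul, natDegree_C,
      natDegree_X] at hdeg
    exact zero_ne_one hdeg
  · have hg1 : (g - 1).natDegree = g.natDegree := by simpa using natDegree_sub_C (p := g) (a := 1)
    have hg0 : g ≠ 0 := ne_zero_of_natDegree_gt hg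
    have hg10 : g - 1 ≠ 0 := ne_zero_of_natDegree_gt (hg1 ▸ hg)
    rw [natDegree_mul (pow_ne_zero _ hg0) hg10, natDegree_pow, hg1, natDegree_X] at hdeg
    have : 1 ≤ n * g.natDegree := Nat.one_le_iff_ne_zero.mpr (by positivity)
    omega

namespace PowerSeries

theorem sub_one_mem_span_X_iff {R : Type*} [CommRing R] {s : R⟦X⟧} :
    s - 1 ∈ Ideal.span {(X : R⟦X⟧)} ↔ constantCoeff s = 1 := by
  rw [Ideal.mem_span_singleton, X_dvd_iff, map_sub, map_one, sub_eq_zero]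

theorem existsUnique_pow_mul_sub_one_eq_X (R : Type*) [CommRing R] (n : ℕ) :
    ∃! s : R⟦X⟧, constantCoeff s = 1 ∧ s ^ n * (s - 1) = X := by
  set F : R⟦X⟧[X] := Polynomial.X ^ n * (Polynomial.X - 1) - Polynomial.C X
  have hmonic : F.Monic := by
    nontriviality R⟦X⟧
    have hlin : (Polynomial.X - 1 : R⟦X⟧[X]).Monic := by simpa using monic_X_sub_C (1 : R⟦X⟧)
    refine Monic.sub_of_left ((monic_X_pow n).mul hlin) ?_
    rw [hlin.degree_mul, degree_X_pow, ← C_1, degree_X_sub_C]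
    exact degree_C_le.trans_lt (by exact_mod_cast n.succ_pos)
  have h₀ : F.eval 1 ∈ Ideal.span {(X : R⟦X⟧)} := by
    simp [F]
  have hunit : IsUnit (Ideal.Quotient.mk (Ideal.span {(X : R⟦X⟧)}) (F.derivative.eval 1)) := by
    simp [F, derivative_mul]
  convert HenselianRing.existsUnique_isRoot hmonic h₀ hunit using 2 with s
  rw [sub_one_mem_span_X_iff, IsRoot, eval_sub, eval_mul, eval_pow, eval_X, eval_sub, eval_X,
    eval_one, eval_C, sub_eq_zero, and_comm]

theorem setOf_coeff_ne_zero_infinite_of_pow_mul_sub_one_eq_X {R : Type*} [CommRing R]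
    [IsDomain R] {n : ℕ} (hn : n ≠ 0) {s : R⟦X⟧} (hs : s ^ n * (s - 1) = X) :
    {m : ℕ | coeff m s ≠ 0}.Infinite := by
  intro hfin
  obtain ⟨N, hN⟩ := hfin.bddAbove
  have hpoly : ((trunc (N + 1) s : R[X]) : R⟦X⟧) = s := by
    ext m
    rw [Polynomial.coeff_coe, coeff_trunc]
    split_ifs with hm
    · rfl
    · by_contra hne
      exact hm (Nat.lt_succ_of_le (hN (Ne.symm hne)))
  apply pow_mul_sub_one_ne_X hn (trunc (N + 1) s)
  rw [← Polynomial.coe_inj]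
  push_cast
  rw [hpoly, hs]

end PowerSeries

/-- There is a unique `s ∈ ℤ[[x]]` with constant term `1` satisfying `s^{p-1}(s-1) = x`,
and infinitely many of its coefficients are not divisible by `p`. -/
theorem stmt_19 (p : ℕ) (hp : p.Prime) :
    (∃! s : PowerSeries ℤ,
      PowerSeries.constantCoeff s = 1 ∧ s ^ (p - 1) * (s - 1) = PowerSeries.X) ∧
    ∀ s : PowerSeries ℤ,
      (PowerSeries.constantCoeff s = 1 ∧ s ^ (p - 1) * (s - 1) = PowerSeries.X) →
      {n : ℕ | ¬ ((p : ℤ) ∣ PowerSeries.coeff n s)}.Infinite := by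
  refine ⟨PowerSeries.existsUnique_pow_mul_sub_one_eq_X ℤ (p - 1), fun s ⟨_, hs⟩ => ?_⟩
  have : Fact p.Prime := ⟨hp⟩
  set φ := Int.castRingHom (ZMod p)
  have hreduced : PowerSeries.map φ s ^ (p - 1) * (PowerSeries.map φ s - 1) = PowerSeries.X := by
    simpa using congrArg (PowerSeries.map φ) hs
  convert PowerSeries.setOf_coeff_ne_zero_infinite_of_pow_mul_sub_one_eq_X
    (Nat.sub_ne_zero_of_lt hp.one_lt) hreduced using 3 with m
  rw [PowerSeries.coeff_map, Ne, eq_intCast, ZMod.intCast_zmod_eq_zero_iff_dvd]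
end
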